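/- arXiv:1808.06296 — 4 statements merged into one kernel-verified Lean document; each statement's English description precedes it below -/
import Mathlib

section
/- Let Ω ⊆ ℝ^d be a nonempty closed convex set, φ : ℝ^d → ℝ be μ-weakly convex (μ > 0) with φ(x) − inf_{z∈Ω} φ(z) ≤ Δ_φ for all x ∈ Ω. Set γ = 1/(2μ) and w_s = s^α with α > 0. Let x₀ ∈ Ω be deterministic and x₁, …, x_{S+1} be Ω-valued random vectors; for each s ≥ 1 let f_s(x) = φ(x) + (1/(2γ))‖x − x_{s−1}‖² and z_s = prox_{γ(φ+δ_Ω)}(x_{s−1}) (the unique minimizer of f_s over Ω). Assume there are constants 0 ≤ ε1_s ≤ 1/(48γ), 0 ≤ ε2_s ≤ 1/2, and 0 ≤ ε3_s ≤ c₃/s (for some c₃ ≥ 0) such that, for every s, almost surely E[f_s(x_s) − f_s(z_s) | all randomness before stage s] ≤ ε1_s‖x_{s−1} − z_s‖² + ε2_s (f_s(x_{s−1}) − f_s(z_s)) + ε3_s. Then (∑_{s=1}^{S+1} w_s E[‖∇φ_γ(x_{s−1})‖²]) / (∑_{s=1}^{S+1} w_s) ≤ 32Δ_φ(α+1)/(γ(S+1))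 + 48 c₃ (α+1)/(γ(S+1) α^{𝟙(α<1)}). -/
open MeasureTheory Finset

/-!
With `μ = 1/(2γ)`, the stage objective `f_s = proxObjective φ μ x_{s-1}` is `μ`-strongly convex, so
its minimiser `z_s` over `Ω` has quadratic growth `f_s(z_s) + (3μ/8)‖y - z_s‖² ≤ f_s(y)`. Taking
`y = x_s` and using `f_{s+1}(z_{s+1}) ≤ f_{s+1}(z_s)` together with the assumed bound on the
expected gap `f_s(x_s) - f_s(z_s)`, the quantity `B_s = 3 E[f_s(z_s)] + 8 E[φ(x_{s-1})]` is a
Lyapunov function: `B_s - B_{s+1} ≥ (7μ/3) E‖x_{s-1} - z_s‖² - 16 ε₃_s`, and `B_s` ranges over an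
interval of length `22 Δ_φ`. Summation by parts against the increasing weights `s^α`, with
`∑ s^α ≥ (S+1)^{α+1}/(α+1)` and `∑ s^{α-1} ≤ (S+1)^α / α^{𝟙(α<1)}`, gives the rate.
-/

section

variable {E : Type*} [NormedAddCommGroup E]

section NormedSpace

variable [NormedSpace ℝ E] {φ : E → ℝ} {μ : ℝ}

lemma StrongConvexOn.add_mul_sq_norm_sub_le_of_isMinOn {f : E → ℝ} {m t : ℝ} {s : Set E} {y z : E}
    (hf : StrongConvexOn s m f) (hmin : IsMinOn f s z) (hz : z ∈ s) (hy : y ∈ s)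
    (ht₀ : 0 < t) (ht₁ : t ≤ 1) :
    f z + (1 - t) * (m / 2) * ‖y - z‖ ^ 2 ≤ f y := by
  have hconv := hf.2 hz hy (sub_nonneg.2 ht₁) ht₀.le (sub_add_cancel 1 t)
  have hle := isMinOn_iff.1 hmin _ (hf.1 hz hy (sub_nonneg.2 ht₁) ht₀.le (sub_add_cancel 1 t))
  rw [norm_sub_rev] at hconv
  simp only [smul_eq_mul] at hconv
  nlinarith

lemma continuous_of_convexOn_add_sq_norm [FiniteDimensional ℝ E]
    (hweak : ConvexOn ℝ Set.univ fun x => φ x + μ / 2 * ‖x‖ ^ 2) : Continuous φ := by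
  have h : Continuous fun x => (φ x + μ / 2 * ‖x‖ ^ 2) - μ / 2 * ‖x‖ ^ 2 :=
    (continuousOn_univ.1 (hweak.continuousOn isOpen_univ)).sub (by fun_prop)
  simpa using h

end NormedSpace

def proxObjective (φ : E → ℝ) (μ : ℝ) (c y : E) : ℝ := φ y + μ * ‖y - c‖ ^ 2

section InnerProductSpace

variable [InnerProductSpace ℝ E] {φ : E → ℝ} {μ : ℝ}

lemma strongConvexOn_proxObjective {s : Set E}
    (hweak : ConvexOn ℝ s fun x => φ x + μ / 2 * ‖x‖ ^ 2) (c : E) :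
    StrongConvexOn s μ (proxObjective φ μ c) := by
  rw [strongConvexOn_iff_convex]
  have h : (fun y => proxObjective φ μ c y - μ / 2 * ‖y‖ ^ 2)
      = (fun y => φ y + μ / 2 * ‖y‖ ^ 2)
        + (⇑(innerSL ℝ (-(2 * μ) • c)) + fun _ => μ * ‖c‖ ^ 2) := by
    ext y
    simp only [proxObjective, Pi.add_apply, innerSL_apply_apply, norm_sub_sq_real,
      real_inner_smul_left, real_inner_comm c y]
    ring
  rw [h]
  exact hweak.add (((innerSL ℝ _).toLinearMap.convexOn hweak.1).add_const _)

lemma proxObjective_stage_le {Ω : Set E} (hμ : 0 ≤ μ)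
    (hweak : ConvexOn ℝ Ω fun x => φ x + μ / 2 * ‖x‖ ^ 2) {c x z z' : E}
    (hx : x ∈ Ω) (hz : z ∈ Ω) (hmin : IsMinOn (proxObjective φ μ c) Ω z)
    (hz' : proxObjective φ μ x z' ≤ proxObjective φ μ x z) :
    3 * proxObjective φ μ x z' + 8 * φ x + 3 * μ * ‖c - z‖ ^ 2
      ≤ 11 * proxObjective φ μ c z + 16 * (proxObjective φ μ c x - proxObjective φ μ c z) := by
  -- growth at `x` with `t = 1/4`: `3 μ ‖x - z‖² ≤ 8 (f_c x - f_c z)`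
  have hgrowth := (strongConvexOn_proxObjective hweak c).add_mul_sq_norm_sub_le_of_isMinOn
    hmin hz hx (by norm_num : (0 : ℝ) < 1 / 4) (by norm_num)
  have hx_le : φ x ≤ proxObjective φ μ c x := le_add_of_nonneg_right (by positivity)
  simp only [proxObjective, norm_sub_rev z x, norm_sub_rev z c] at hgrowth hz' hx_le ⊢
  linarith

end InnerProductSpace

section WeightedSums

lemma sum_Icc_mul_le_of_le_sub_succ {w a e B : ℕ → ℝ} {M : ℝ} {n : ℕ}
    (hw : Monotone w) (hw₀ : 0 ≤ w) (hB : ∀ s ∈ Icc 1 (n + 1), 0 ≤ B s ∧ B s ≤ M)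
    (hstep : ∀ s ∈ Icc 1 n, a s ≤ B s - B (s + 1) + e s) :
    ∑ s ∈ Icc 1 n, w s * a s ≤ w n * M + ∑ s ∈ Icc 1 n, w s * e s := by
  have hB' : ∀ s, 1 ≤ s → s ≤ n + 1 → 0 ≤ B s ∧ B s ≤ M :=
    fun s h₁ h₂ => hB s (mem_Icc.2 ⟨h₁, h₂⟩)
  suffices h : ∀ k ≤ n, ∑ s ∈ Icc 1 k, w s * a s
      ≤ w k * (M - B (k + 1)) + ∑ s ∈ Icc 1 k, w s * e s by
    nlinarith [h n le_rfl, mul_nonneg (hw₀ n) (hB' (n + 1) (by omega) le_rfl).1]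
  intro k
  induction k with
  | zero =>
    intro _
    simpa using mul_nonneg (hw₀ 0) (sub_nonneg.2 (hB' 1 le_rfl (by omega)).2)
  | succ k ih =>
    intro hk
    rw [sum_Icc_succ_top (by omega), sum_Icc_succ_top (by omega)]
    have hstep' :=
      mul_le_mul_of_nonneg_left (hstep (k + 1) (mem_Icc.2 ⟨by omega, hk⟩)) (hw₀ (k + 1))
    have hBk := (hB' (k + 1) (by omega) (by omega)).2
    nlinarith [ih (by omega), hw k.le_succ]

lemma sum_mul_le_of_lyapunov {μ L M : ℝ} {N : ℕ} {A V D G ε₁ ε₂ ε₃ w : ℕ → ℝ}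
    (hμ : 0 ≤ μ) (hM : 0 ≤ M) (hw : Monotone w) (hw₀ : 0 ≤ w)
    (hD : ∀ s, 0 ≤ D s) (hbounds : ∀ s ∈ Icc 1 N, L + μ * D s ≤ A s ∧ A s ≤ V s ∧ V s ≤ L + M)
    (hstage : ∀ s ∈ Icc 1 N, s < N →
      3 * A (s + 1) + 8 * V (s + 1) + 3 * μ * D s ≤ 11 * A s + 16 * G s)
    (hgap : ∀ s ∈ Icc 1 N, G s ≤ ε₁ s * D s + ε₂ s * (V s - A s) + ε₃ s)
    (hε₁ : ∀ s ∈ Icc 1 N, ε₁ s ≤ μ / 24) (hε₂ : ∀ s ∈ Icc 1 N, ε₂ s ≤ 1 / 2)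
    (hε₃ : ∀ s ∈ Icc 1 N, 0 ≤ ε₃ s) :
    7 * μ * ∑ s ∈ Icc 1 N, w s * D s ≤ 33 * M * w N + 48 * ∑ s ∈ Icc 1 N, w s * ε₃ s := by
  -- nothing is known about stage `N + 1`, so `B` stops there; the last step uses `3 μ D N ≤ B N`
  set B : ℕ → ℝ := fun s => if s ≤ N then 3 * A s + 8 * V s - 11 * L else 0
  have hB : ∀ s ∈ Icc 1 (N + 1), 0 ≤ B s ∧ B s ≤ 11 * M := by
    intro s hs
    by_cases hsN : s ≤ N
    · obtain ⟨h₁, h₂, h₃⟩ := hbounds s (mem_Icc.2 ⟨(mem_Icc.1 hs).1, hsN⟩)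
      simp only [B, if_pos hsN]
      constructor <;> nlinarith [mul_nonneg hμ (hD s)]
    · simp only [B, if_neg hsN]
      exact ⟨le_rfl, by positivity⟩
  have hstep : ∀ s ∈ Icc 1 N, 7 * μ / 3 * D s ≤ B s - B (s + 1) + 16 * ε₃ s := by
    intro s hs
    obtain ⟨h₁, h₂, -⟩ := hbounds s hs
    have hε₁D := mul_le_mul_of_nonneg_right (hε₁ s hs) (hD s)
    have hε₂VA := mul_le_mul_of_nonneg_right (hε₂ s hs) (sub_nonneg.2 h₂)
    rcases (mem_Icc.1 hs).2.lt_or_eq with hlt | rfl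
    · simp only [B, if_pos hlt.le, if_pos (Nat.succ_le_of_lt hlt)]
      linarith [hstage s hs hlt, hgap s hs]
    · simp only [B, if_pos le_rfl, if_neg (Nat.not_succ_le_self s)]
      nlinarith [hε₃ s hs, mul_nonneg hμ (hD s)]
  calc 7 * μ * ∑ s ∈ Icc 1 N, w s * D s = 3 * ∑ s ∈ Icc 1 N, w s * (7 * μ / 3 * D s) := by
        rw [mul_sum, mul_sum]
        exact sum_congr rfl fun s _ => by ring
    _ ≤ 3 * (w N * (11 * M) + ∑ s ∈ Icc 1 N, w s * (16 * ε₃ s)) := by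
        gcongr
        exact sum_Icc_mul_le_of_le_sub_succ hw hw₀ hB hstep
    _ = 33 * M * w N + 48 * ∑ s ∈ Icc 1 N, w s * ε₃ s := by
        rw [mul_add, mul_sum, mul_sum]
        congr 1
        · ring
        · exact sum_congr rfl fun s _ => by ring

lemma sum_Icc_rpow_ge {α : ℝ} (hα : 0 ≤ α) (N : ℕ) :
    (N : ℝ) ^ (α + 1) / (α + 1) ≤ ∑ s ∈ Icc 1 N, (s : ℝ) ^ α := by
  have hmono : MonotoneOn (fun x : ℝ => x ^ α) (Set.Icc 0 (0 + N)) :=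
    fun x hx y _ hxy => Real.rpow_le_rpow hx.1 hxy hα
  have h := hmono.integral_le_sum
  rw [zero_add, integral_rpow (Or.inl (by linarith)), Real.zero_rpow (by linarith), sub_zero] at h
  convert h using 1
  rw [← Ico_add_one_right_eq_Icc, sum_Ico_eq_sum_range]
  simp [add_comm]

lemma rpow_sub_one_le_div {α : ℝ} (hα : 0 < α) (hα₁ : α ≤ 1) {s : ℝ} (hs : 1 ≤ s) :
    s ^ (α - 1) ≤ (s ^ α - (s - 1) ^ α) / α := by
  calc s ^ (α - 1) = ∫ _ in (s - 1)..s, s ^ (α - 1) := by simp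
    _ ≤ ∫ x in (s - 1)..s, x ^ (α - 1) := by
      refine intervalIntegral.integral_mono_on_of_le_Ioo (by linarith) intervalIntegrable_const
        (intervalIntegral.intervalIntegrable_rpow' (by linarith)) fun x hx => ?_
      exact Real.rpow_le_rpow_of_nonpos (by linarith [hx.1]) hx.2.le (by linarith)
    _ = (s ^ α - (s - 1) ^ α) / α := by
      rw [integral_rpow (Or.inl (by linarith)), sub_add_cancel]

lemma sum_Icc_rpow_sub_one_le {α : ℝ} (hα : 0 < α) (N : ℕ) :
    ∑ s ∈ Icc 1 N, (s : ℝ) ^ (α - 1) ≤ (N : ℝ) ^ α / (if α < 1 then α else 1) := by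
  split_ifs with h
  · induction N with
    | zero => simp [Real.zero_rpow hα.ne']
    | succ N ih =>
      rw [sum_Icc_succ_top (by omega)]
      have := rpow_sub_one_le_div hα h.le (by simp : (1 : ℝ) ≤ (N + 1 : ℕ))
      push_cast at this ⊢
      rw [add_sub_cancel_right, sub_div] at this
      linarith
  · rcases N.eq_zero_or_pos with rfl | hN
    · simp [Real.zero_rpow hα.ne']
    have hbound : ∀ s ∈ Icc 1 N, (s : ℝ) ^ (α - 1) ≤ (N : ℝ) ^ (α - 1) := fun s hs =>
      Real.rpow_le_rpow (by positivity) (by exact_mod_cast (mem_Icc.1 hs).2)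
        (by linarith [not_lt.1 h])
    refine (sum_le_card_nsmul _ _ _ hbound).trans (le_of_eq ?_)
    rw [Nat.card_Icc, nsmul_eq_mul, Real.rpow_sub_one (by positivity), div_one]
    push_cast
    field_simp

lemma sum_Icc_rpow_mul_le_of_le_div {α c : ℝ} (hα : 0 < α) (hc : 0 ≤ c) {N : ℕ} {ε : ℕ → ℝ}
    (hε : ∀ s ∈ Icc 1 N, ε s ≤ c / s) :
    ∑ s ∈ Icc 1 N, (s : ℝ) ^ α * ε s ≤ c * ((N : ℝ) ^ α / (if α < 1 then α else 1)) := by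
  calc _ ≤ ∑ s ∈ Icc 1 N, c * (s : ℝ) ^ (α - 1) := sum_le_sum fun s hs => ?_
    _ ≤ _ := by
      rw [← mul_sum]
      exact mul_le_mul_of_nonneg_left (sum_Icc_rpow_sub_one_le hα N) hc
  have hs₀ : (0 : ℝ) < s := by exact_mod_cast (mem_Icc.1 hs).1
  calc (s : ℝ) ^ α * ε s ≤ (s : ℝ) ^ α * (c / s) :=
        mul_le_mul_of_nonneg_left (hε s hs) (by positivity)
    _ = c * (s : ℝ) ^ (α - 1) := by rw [Real.rpow_sub_one hs₀.ne']; ring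

lemma div_sum_Icc_rpow_le {α K X : ℝ} (hα : 0 ≤ α) (hK : 0 ≤ K) {N : ℕ} (hN : 0 < N)
    (hX : X ≤ K * (N : ℝ) ^ α) : X / ∑ s ∈ Icc 1 N, (s : ℝ) ^ α ≤ K * (α + 1) / N := by
  have hN' : (0 : ℝ) < N := by exact_mod_cast hN
  have hW := sum_Icc_rpow_ge hα N
  rw [Real.rpow_add hN', Real.rpow_one] at hW
  rw [div_le_iff₀ ((by positivity : (0 : ℝ) < (N : ℝ) ^ α * N / (α + 1)).trans_le hW)]
  calc X ≤ K * (N : ℝ) ^ α := hX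
    _ = K * (α + 1) / N * ((N : ℝ) ^ α * N / (α + 1)) := by field_simp
    _ ≤ K * (α + 1) / N * ∑ s ∈ Icc 1 N, (s : ℝ) ^ α := by gcongr

lemma sum_rpow_mul_div_sum_rpow_le {α μ M c : ℝ} {N : ℕ} {D ε : ℕ → ℝ} (hα : 0 < α)
    (hμ : 0 < μ) (hM : 0 ≤ M) (hc : 0 ≤ c) (hN : 0 < N) (hε : ∀ s ∈ Icc 1 N, ε s ≤ c / s)
    (h : 7 * μ * ∑ s ∈ Icc 1 N, (s : ℝ) ^ α * D s
      ≤ 33 * M * (N : ℝ) ^ α + 48 * ∑ s ∈ Icc 1 N, (s : ℝ) ^ α * ε s) :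
    (∑ s ∈ Icc 1 N, (s : ℝ) ^ α * ((2 * μ) ^ 2 * D s)) / ∑ s ∈ Icc 1 N, (s : ℝ) ^ α
      ≤ 2 * μ * (16 * M + 48 * c / (if α < 1 then α else 1)) * (α + 1) / N := by
  have hεsum := sum_Icc_rpow_mul_le_of_le_div hα hc hε
  set m : ℝ := if α < 1 then α else 1
  set p : ℝ := (N : ℝ) ^ α
  have hp : 0 ≤ p := by positivity
  have hm : 0 < m := by positivity
  refine div_sum_Icc_rpow_le hα.le (by positivity) hN ?_
  calc _ = 4 * μ / 7 * (7 * μ * ∑ s ∈ Icc 1 N, (s : ℝ) ^ α * D s) := by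
        rw [mul_sum, mul_sum]
        exact sum_congr rfl fun s _ => by ring
    _ ≤ 4 * μ / 7 * (33 * M * p + 48 * (c * (p / m))) := by gcongr; linarith
    _ ≤ 2 * μ * (16 * M + 48 * c / m) * p := by
        have hMp := mul_nonneg (mul_nonneg hμ.le hM) hp
        have hcp := mul_nonneg (mul_nonneg hμ.le hc) (div_nonneg hp hm.le)
        have key : 2 * μ * (16 * M + 48 * c / m) * p - 4 * μ / 7 * (33 * M * p + 48 * (c * (p / m)))
            = 92 / 7 * (μ * M * p) + 480 / 7 * (μ * c * (p / m)) := by ring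
        linarith

end WeightedSums

section Expectation

variable {Θ : Type*} {m mΘ : MeasurableSpace Θ} {P : Measure Θ} {Ω : Set E} {φ : E → ℝ} {μ : ℝ}
  {c x z z' : Θ → E}

lemma integral_le_of_condExp_le [IsFiniteMeasure P] {X Y : Θ → ℝ} (hm : m ≤ mΘ)
    (hY : Integrable Y P) (h : P[X|m] ≤ᵐ[P] Y) : ∫ ω, X ω ∂P ≤ ∫ ω, Y ω ∂P := by
  rw [← integral_condExp hm]
  exact integral_mono_ae integrable_condExp hY h

lemma integrable_proxObjective_of_isMinOn [IsFiniteMeasure P] {L M : ℝ} (hμ : 0 ≤ μ)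
    (hφ : Continuous φ)
    (hφΩ : ∀ y ∈ Ω, L ≤ φ y ∧ φ y ≤ L + M) (hc : ∀ ω, c ω ∈ Ω) (hz : ∀ ω, z ω ∈ Ω)
    (hmin : ∀ ω, IsMinOn (proxObjective φ μ (c ω)) Ω (z ω))
    (hcm : AEStronglyMeasurable c P) (hzm : AEStronglyMeasurable z P) :
    Integrable (fun ω => proxObjective φ μ (c ω) (z ω)) P := by
  have hmeas : AEStronglyMeasurable (fun ω => proxObjective φ μ (c ω) (z ω)) P :=
    (hφ.comp_aestronglyMeasurable hzm).add
      (aestronglyMeasurable_const.mul ((continuous_norm.pow 2).comp_aestronglyMeasurable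
        (hzm.sub hcm)))
  refine Integrable.of_bound hmeas (|L| + |M|) (Filter.Eventually.of_forall fun ω => ?_)
  have hlow : L ≤ proxObjective φ μ (c ω) (z ω) :=
    (hφΩ _ (hz ω)).1.trans (le_add_of_nonneg_right (by positivity))
  have hup : proxObjective φ μ (c ω) (z ω) ≤ L + M := by
    have := isMinOn_iff.1 (hmin ω) _ (hc ω)
    simp only [proxObjective, sub_self, norm_zero] at this ⊢
    linarith [(hφΩ _ (hc ω)).2]
  rw [Real.norm_eq_abs, abs_le]
  constructor <;> linarith [neg_abs_le L, le_abs_self L, neg_abs_le M, le_abs_self M]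

lemma integral_proxObjective_bounds [IsProbabilityMeasure P] {L M : ℝ}
    (hφΩ : ∀ y ∈ Ω, L ≤ φ y ∧ φ y ≤ L + M) (hc : ∀ ω, c ω ∈ Ω) (hz : ∀ ω, z ω ∈ Ω)
    (hmin : ∀ ω, IsMinOn (proxObjective φ μ (c ω)) Ω (z ω))
    (hA : Integrable (fun ω => proxObjective φ μ (c ω) (z ω)) P)
    (hφc : Integrable (fun ω => φ (c ω)) P) (hsq : Integrable (fun ω => ‖c ω - z ω‖ ^ 2) P) :
    L + μ * ∫ ω, ‖c ω - z ω‖ ^ 2 ∂P ≤ ∫ ω, proxObjective φ μ (c ω) (z ω) ∂P ∧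
      ∫ ω, proxObjective φ μ (c ω) (z ω) ∂P ≤ ∫ ω, φ (c ω) ∂P ∧ ∫ ω, φ (c ω) ∂P ≤ L + M := by
  refine ⟨?_, integral_mono hA hφc fun ω => ?_, ?_⟩
  · calc L + μ * ∫ ω, ‖c ω - z ω‖ ^ 2 ∂P = ∫ ω, (L + μ * ‖c ω - z ω‖ ^ 2) ∂P := by
          rw [integral_add (integrable_const L) (hsq.const_mul μ), integral_const_mul]
          simp
      _ ≤ ∫ ω, proxObjective φ μ (c ω) (z ω) ∂P :=
          integral_mono ((integrable_const L).add (hsq.const_mul μ)) hA fun ω => by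
            simpa [proxObjective, norm_sub_rev] using (hφΩ _ (hz ω)).1
  · simpa [proxObjective] using isMinOn_iff.1 (hmin ω) _ (hc ω)
  · calc ∫ ω, φ (c ω) ∂P ≤ ∫ _, (L + M) ∂P :=
          integral_mono hφc (integrable_const _) fun ω => (hφΩ _ (hc ω)).2
      _ = L + M := by simp

lemma integral_proxObjective_stage_le [InnerProductSpace ℝ E] (hμ : 0 ≤ μ)
    (hweak : ConvexOn ℝ Ω fun x => φ x + μ / 2 * ‖x‖ ^ 2)
    (hx : ∀ ω, x ω ∈ Ω) (hz : ∀ ω, z ω ∈ Ω)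
    (hmin : ∀ ω, IsMinOn (proxObjective φ μ (c ω)) Ω (z ω))
    (hz' : ∀ ω, proxObjective φ μ (x ω) (z' ω) ≤ proxObjective φ μ (x ω) (z ω))
    (hA' : Integrable (fun ω => proxObjective φ μ (x ω) (z' ω)) P)
    (hφx : Integrable (fun ω => φ (x ω)) P) (hsq : Integrable (fun ω => ‖c ω - z ω‖ ^ 2) P)
    (hA : Integrable (fun ω => proxObjective φ μ (c ω) (z ω)) P)
    (hgap : Integrable
      (fun ω => proxObjective φ μ (c ω) (x ω) - proxObjective φ μ (c ω) (z ω)) P) :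
    3 * ∫ ω, proxObjective φ μ (x ω) (z' ω) ∂P + 8 * ∫ ω, φ (x ω) ∂P
        + 3 * μ * ∫ ω, ‖c ω - z ω‖ ^ 2 ∂P
      ≤ 11 * ∫ ω, proxObjective φ μ (c ω) (z ω) ∂P
        + 16 * ∫ ω, (proxObjective φ μ (c ω) (x ω) - proxObjective φ μ (c ω) (z ω)) ∂P := by
  have hleft := (hA'.const_mul 3).fun_add (hφx.const_mul 8)
  have h := integral_mono (hleft.fun_add (hsq.const_mul (3 * μ)))
    ((hA.const_mul 11).fun_add (hgap.const_mul 16))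
    fun ω => proxObjective_stage_le hμ hweak (hx ω) (hz ω) (hmin ω) (hz' ω)
  rwa [integral_add hleft (hsq.const_mul (3 * μ)), integral_add (hA'.const_mul 3)
    (hφx.const_mul 8), integral_add (hA.const_mul 11) (hgap.const_mul 16), integral_const_mul,
    integral_const_mul, integral_const_mul, integral_const_mul, integral_const_mul] at h

lemma integral_gap_le_of_condExp_le [IsProbabilityMeasure P]
    (hm : m ≤ mΘ) {ε₁ ε₂ ε₃ : ℝ} (hφc : Integrable (fun ω => φ (c ω)) P)
    (hsq : Integrable (fun ω => ‖c ω - z ω‖ ^ 2) P)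
    (hA : Integrable (fun ω => proxObjective φ μ (c ω) (z ω)) P)
    (hE : ∀ᵐ ω ∂P, P[fun ω' => proxObjective φ μ (c ω') (x ω')
          - proxObjective φ μ (c ω') (z ω') | m] ω
        ≤ ε₁ * ‖c ω - z ω‖ ^ 2
          + ε₂ * (proxObjective φ μ (c ω) (c ω) - proxObjective φ μ (c ω) (z ω)) + ε₃) :
    ∫ ω, (proxObjective φ μ (c ω) (x ω) - proxObjective φ μ (c ω) (z ω)) ∂P
      ≤ ε₁ * ∫ ω, ‖c ω - z ω‖ ^ 2 ∂P
        + ε₂ * (∫ ω, φ (c ω) ∂P - ∫ ω, proxObjective φ μ (c ω) (z ω) ∂P) + ε₃ := by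
  have hcc : ∀ ω, proxObjective φ μ (c ω) (c ω) = φ (c ω) := by simp [proxObjective]
  simp only [hcc] at hE
  have hlin := (hsq.const_mul ε₁).fun_add ((hφc.sub' hA).const_mul ε₂)
  have h := integral_le_of_condExp_le hm (hlin.fun_add (integrable_const ε₃)) hE
  rwa [integral_add hlin (integrable_const ε₃),
    integral_add (hsq.const_mul ε₁) ((hφc.sub' hA).const_mul ε₂), integral_const_mul,
    integral_const_mul, integral_sub hφc hA, integral_const, probReal_univ, one_smul] at h

theorem sum_mul_integral_sq_norm_sub_prox_le [IsProbabilityMeasure P] [InnerProductSpace ℝ E]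
    [FiniteDimensional ℝ E]
    (hconv : Convex ℝ Ω) (hμ : 0 < μ)
    (hweak : ConvexOn ℝ Set.univ fun x => φ x + μ / 2 * ‖x‖ ^ 2)
    {L M : ℝ} (hφΩ : ∀ y ∈ Ω, L ≤ φ y ∧ φ y ≤ L + M)
    {N : ℕ} {𝒢 : ℕ → MeasurableSpace Θ} (hle : ∀ s, 𝒢 s ≤ mΘ)
    {x z : ℕ → Θ → E} (hxΩ : ∀ s ω, x s ω ∈ Ω)
    (hxm : ∀ s, AEStronglyMeasurable (x s) P)
    (hzm : ∀ s ∈ Icc 1 N, AEStronglyMeasurable (z s) P)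
    (hz : ∀ s ∈ Icc 1 N, ∀ ω,
      z s ω ∈ Ω ∧ IsMinOn (proxObjective φ μ (x (s - 1) ω)) Ω (z s ω))
    {ε₁ ε₂ ε₃ : ℕ → ℝ} (hε₁ : ∀ s ∈ Icc 1 N, ε₁ s ≤ μ / 24)
    (hε₂ : ∀ s ∈ Icc 1 N, ε₂ s ≤ 1 / 2) (hε₃ : ∀ s ∈ Icc 1 N, 0 ≤ ε₃ s)
    (hintφ : ∀ s, Integrable (fun ω => φ (x s ω)) P)
    (hintgap : ∀ s ∈ Icc 1 N, Integrable (fun ω => proxObjective φ μ (x (s - 1) ω) (x s ω)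
      - proxObjective φ μ (x (s - 1) ω) (z s ω)) P)
    (hintsq : ∀ s ∈ Icc 1 N, Integrable (fun ω => ‖x (s - 1) ω - z s ω‖ ^ 2) P)
    (hE : ∀ s ∈ Icc 1 N, ∀ᵐ ω ∂P,
      P[fun ω' => proxObjective φ μ (x (s - 1) ω') (x s ω')
          - proxObjective φ μ (x (s - 1) ω') (z s ω') | 𝒢 (s - 1)] ω
        ≤ ε₁ s * ‖x (s - 1) ω - z s ω‖ ^ 2
          + ε₂ s * (proxObjective φ μ (x (s - 1) ω) (x (s - 1) ω)
            - proxObjective φ μ (x (s - 1) ω) (z s ω)) + ε₃ s)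
    {w : ℕ → ℝ} (hw : Monotone w) (hw₀ : 0 ≤ w) :
    7 * μ * ∑ s ∈ Icc 1 N, w s * ∫ ω, ‖x (s - 1) ω - z s ω‖ ^ 2 ∂P
      ≤ 33 * M * w N + 48 * ∑ s ∈ Icc 1 N, w s * ε₃ s := by
  set A : ℕ → ℝ := fun s => ∫ ω, proxObjective φ μ (x (s - 1) ω) (z s ω) ∂P
  set V : ℕ → ℝ := fun s => ∫ ω, φ (x (s - 1) ω) ∂P
  set D : ℕ → ℝ := fun s => ∫ ω, ‖x (s - 1) ω - z s ω‖ ^ 2 ∂P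
  set G : ℕ → ℝ := fun s => ∫ ω, (proxObjective φ μ (x (s - 1) ω) (x s ω)
      - proxObjective φ μ (x (s - 1) ω) (z s ω)) ∂P
  have hA : ∀ s ∈ Icc 1 N,
      Integrable (fun ω => proxObjective φ μ (x (s - 1) ω) (z s ω)) P := fun s hs =>
    integrable_proxObjective_of_isMinOn hμ.le (continuous_of_convexOn_add_sq_norm hweak) hφΩ
      (hxΩ _) (fun ω => (hz s hs ω).1) (fun ω => (hz s hs ω).2) (hxm _) (hzm s hs)
  have hbounds : ∀ s ∈ Icc 1 N, L + μ * D s ≤ A s ∧ A s ≤ V s ∧ V s ≤ L + M := fun s hs =>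
    integral_proxObjective_bounds hφΩ (hxΩ _) (fun ω => (hz s hs ω).1) (fun ω => (hz s hs ω).2)
      (hA s hs) (hintφ _) (hintsq s hs)
  have hD : ∀ s, 0 ≤ D s := fun s => integral_nonneg fun ω => sq_nonneg _
  have hgap : ∀ s ∈ Icc 1 N, G s ≤ ε₁ s * D s + ε₂ s * (V s - A s) + ε₃ s := fun s hs =>
    integral_gap_le_of_condExp_le (hle _) (hintφ _) (hintsq s hs) (hA s hs) (hE s hs)
  have hstage : ∀ s ∈ Icc 1 N, s < N →
      3 * A (s + 1) + 8 * V (s + 1) + 3 * μ * D s ≤ 11 * A s + 16 * G s := by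
    intro s hs hsN
    have hs₁ : s + 1 ∈ Icc 1 N := mem_Icc.2 ⟨by omega, hsN⟩
    have := integral_proxObjective_stage_le hμ.le (hweak.subset (Set.subset_univ Ω) hconv)
      (hxΩ s) (fun ω => (hz s hs ω).1) (fun ω => (hz s hs ω).2)
      (fun ω => isMinOn_iff.1 (hz (s + 1) hs₁ ω).2 _ (hz s hs ω).1) (hA (s + 1) hs₁)
      (hintφ s) (hintsq s hs) (hA s hs) (hintgap s hs)
    simpa only [A, V, Nat.add_sub_cancel] using this
  have hM : 0 ≤ M := by
    obtain ⟨ω⟩ := nonempty_of_isProbabilityMeasure P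
    linarith [hφΩ _ (hxΩ 0 ω)]
  exact sum_mul_le_of_lyapunov hμ.le hM hw hw₀ hD hbounds hstage hgap hε₁ hε₂ hε₃

end Expectation

end

theorem stmt_0_general {d : ℕ} {Θ : Type*} [mΘ : MeasurableSpace Θ]
    (P : Measure Θ) [IsProbabilityMeasure P]
    (Ω : Set (EuclideanSpace ℝ (Fin d))) (hne : Ω.Nonempty)
    (hconv : Convex ℝ Ω)
    (φ : EuclideanSpace ℝ (Fin d) → ℝ) (μ γ Δφ α c₃ : ℝ)
    (hμ : 0 < μ) (hγ : γ = 1 / (2 * μ)) (hα : 0 < α) (hc₃ : 0 ≤ c₃)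
    (hweak : ConvexOn ℝ Set.univ fun x => φ x + μ / 2 * ‖x‖ ^ 2)
    (hΔ : ∀ x ∈ Ω, ∀ z ∈ Ω, φ x - φ z ≤ Δφ)
    (S : ℕ)
    (𝒢 : ℕ → MeasurableSpace Θ) (hle : ∀ s, 𝒢 s ≤ mΘ)
    (x z : ℕ → Θ → EuclideanSpace ℝ (Fin d))
    (hxΩ : ∀ s ω, x s ω ∈ Ω)
    (hadapt : ∀ s, StronglyMeasurable[𝒢 s] (x s))
    (hzadapt : ∀ s ∈ Finset.Icc 1 (S + 1), StronglyMeasurable[𝒢 (s - 1)] (z s))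
    -- z_s is the minimizer over Ω of f_s(x) = φ(x) + (1/(2γ))‖x - x_{s-1}‖²
    (hz : ∀ s ∈ Finset.Icc 1 (S + 1), ∀ ω, z s ω ∈ Ω ∧ ∀ y ∈ Ω,
      φ (z s ω) + 1 / (2 * γ) * ‖z s ω - x (s - 1) ω‖ ^ 2
        ≤ φ y + 1 / (2 * γ) * ‖y - x (s - 1) ω‖ ^ 2)
    (ε₁ ε₂ ε₃ : ℕ → ℝ)
    (hε₁ : ∀ s ∈ Finset.Icc 1 (S + 1), 0 ≤ ε₁ s ∧ ε₁ s ≤ 1 / (48 * γ))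
    (hε₂ : ∀ s ∈ Finset.Icc 1 (S + 1), 0 ≤ ε₂ s ∧ ε₂ s ≤ 1 / 2)
    (hε₃ : ∀ s ∈ Finset.Icc 1 (S + 1), 0 ≤ ε₃ s ∧ ε₃ s ≤ c₃ / (s : ℝ))
    (hintφ : ∀ s, Integrable (fun ω => φ (x s ω)) P)
    (hintgap : ∀ s ∈ Finset.Icc 1 (S + 1), Integrable (fun ω =>
      (φ (x s ω) + 1 / (2 * γ) * ‖x s ω - x (s - 1) ω‖ ^ 2)
        - (φ (z s ω) + 1 / (2 * γ) * ‖z s ω - x (s - 1) ω‖ ^ 2)) P)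
    (hintsq : ∀ s ∈ Finset.Icc 1 (S + 1),
      Integrable (fun ω => ‖x (s - 1) ω - z s ω‖ ^ 2) P)
    -- almost sure conditional one-stage bound
    (hE : ∀ s ∈ Finset.Icc 1 (S + 1), ∀ᵐ ω ∂P,
      (P[fun ω' => (φ (x s ω') + 1 / (2 * γ) * ‖x s ω' - x (s - 1) ω'‖ ^ 2)
            - (φ (z s ω') + 1 / (2 * γ) * ‖z s ω' - x (s - 1) ω'‖ ^ 2) | 𝒢 (s - 1)]) ω
        ≤ ε₁ s * ‖x (s - 1) ω - z s ω‖ ^ 2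
          + ε₂ s * ((φ (x (s - 1) ω) + 1 / (2 * γ) * ‖x (s - 1) ω - x (s - 1) ω‖ ^ 2)
              - (φ (z s ω) + 1 / (2 * γ) * ‖z s ω - x (s - 1) ω‖ ^ 2))
          + ε₃ s) :
    (∑ s ∈ Finset.Icc 1 (S + 1),
        (s : ℝ) ^ α * ∫ ω, ‖γ⁻¹ • (x (s - 1) ω - z s ω)‖ ^ 2 ∂P)
        / (∑ s ∈ Finset.Icc 1 (S + 1), (s : ℝ) ^ α)
      ≤ 32 * Δφ * (α + 1) / (γ * ((S : ℝ) + 1))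
        + 48 * c₃ * (α + 1) / (γ * ((S : ℝ) + 1) * (if α < 1 then α else 1)) := by
  obtain ⟨c, hc⟩ := hne
  have hγμ : 1 / (2 * γ) = μ := by rw [hγ]; field_simp
  rw [hγμ] at hz hintgap hE
  have hΔ₀ : 0 ≤ Δφ := by linarith [hΔ c hc c hc]
  have hcore := sum_mul_integral_sq_norm_sub_prox_le (P := P) hconv hμ hweak
    (L := φ c - Δφ) (M := 2 * Δφ)
    (fun y hy => ⟨by linarith [hΔ c hc y hy], by linarith [hΔ y hy c hc]⟩) hle hxΩ
    (fun s => ((hadapt s).mono (hle s)).aestronglyMeasurable)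
    (fun s hs => ((hzadapt s hs).mono (hle _)).aestronglyMeasurable) hz
    (fun s hs => (hε₁ s hs).2.trans_eq (by rw [hγ]; field_simp; ring))
    (fun s hs => (hε₂ s hs).2) (fun s hs => (hε₃ s hs).1) hintφ hintgap hintsq hE
    (w := fun s : ℕ => (s : ℝ) ^ α)
    (fun a b hab => Real.rpow_le_rpow (by positivity) (by exact_mod_cast hab) hα.le)
    (fun s => by positivity)
  have hnorm : ∀ s, ∫ ω, ‖γ⁻¹ • (x (s - 1) ω - z s ω)‖ ^ 2 ∂P
      = (2 * μ) ^ 2 * ∫ ω, ‖x (s - 1) ω - z s ω‖ ^ 2 ∂P := fun s => by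
    simp_rw [norm_smul, mul_pow, Real.norm_eq_abs, sq_abs, hγ, one_div, inv_inv, mul_pow]
    exact integral_const_mul _ _
  simp only [hnorm]
  refine (sum_rpow_mul_div_sum_rpow_le hα hμ (by linarith) hc₃ S.succ_pos
    (fun s hs => (hε₃ s hs).2) hcore).trans_eq ?_
  rw [hγ]
  push_cast
  field_simp
  ring

/-- Meta theorem for the stagewise framework: if at each stage `s` the stochastic
algorithm returns `x_s ∈ Ω` with
`E[f_s(x_s) - f_s(z_s) | past] ≤ ε₁ₛ‖x_{s-1} - z_s‖² + ε₂ₛ(f_s(x_{s-1}) - f_s(z_s)) + ε₃ₛ`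
(a.s.), where `f_s(x) = φ(x) + (1/(2γ))‖x - x_{s-1}‖²`, `z_s = prox_{γ(φ+δ_Ω)}(x_{s-1})`,
`γ = 1/(2μ)`, `ε₁ₛ ≤ 1/(48γ)`, `ε₂ₛ ≤ 1/2` and `ε₃ₛ ≤ c₃/s`, then with weights
`w_s = s^α` (`α > 0`):
`(∑_{s=1}^{S+1} w_s E‖∇φ_γ(x_{s-1})‖²)/(∑_{s=1}^{S+1} w_s)
   ≤ 32Δ_φ(α+1)/(γ(S+1)) + 48c₃(α+1)/(γ(S+1)α^{𝟙(α<1)})`. -/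
theorem stmt_0 {d : ℕ} {Θ : Type*} [mΘ : MeasurableSpace Θ]
    (P : Measure Θ) [IsProbabilityMeasure P]
    (Ω : Set (EuclideanSpace ℝ (Fin d))) (hne : Ω.Nonempty) (hcl : IsClosed Ω)
    (hconv : Convex ℝ Ω)
    (φ : EuclideanSpace ℝ (Fin d) → ℝ) (μ γ Δφ α c₃ : ℝ)
    (hμ : 0 < μ) (hγ : γ = 1 / (2 * μ)) (hα : 0 < α) (hc₃ : 0 ≤ c₃)
    (hweak : ConvexOn ℝ Set.univ fun x => φ x + μ / 2 * ‖x‖ ^ 2)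
    (hΔ : ∀ x ∈ Ω, ∀ z ∈ Ω, φ x - φ z ≤ Δφ)
    (S : ℕ)
    (𝒢 : ℕ → MeasurableSpace Θ) (hle : ∀ s, 𝒢 s ≤ mΘ) (hmono : Monotone 𝒢)
    (x z : ℕ → Θ → EuclideanSpace ℝ (Fin d))
    (hx0 : ∃ c ∈ Ω, x 0 = fun _ => c)
    (hxΩ : ∀ s ω, x s ω ∈ Ω)
    (hadapt : ∀ s, StronglyMeasurable[𝒢 s] (x s))
    (hzadapt : ∀ s ∈ Finset.Icc 1 (S + 1), StronglyMeasurable[𝒢 (s - 1)] (z s))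
    -- z_s is the minimizer over Ω of f_s(x) = φ(x) + (1/(2γ))‖x - x_{s-1}‖²
    (hz : ∀ s ∈ Finset.Icc 1 (S + 1), ∀ ω, z s ω ∈ Ω ∧ ∀ y ∈ Ω,
      φ (z s ω) + 1 / (2 * γ) * ‖z s ω - x (s - 1) ω‖ ^ 2
        ≤ φ y + 1 / (2 * γ) * ‖y - x (s - 1) ω‖ ^ 2)
    (ε₁ ε₂ ε₃ : ℕ → ℝ)
    (hε₁ : ∀ s ∈ Finset.Icc 1 (S + 1), 0 ≤ ε₁ s ∧ ε₁ s ≤ 1 / (48 * γ))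
    (hε₂ : ∀ s ∈ Finset.Icc 1 (S + 1), 0 ≤ ε₂ s ∧ ε₂ s ≤ 1 / 2)
    (hε₃ : ∀ s ∈ Finset.Icc 1 (S + 1), 0 ≤ ε₃ s ∧ ε₃ s ≤ c₃ / (s : ℝ))
    (hintφ : ∀ s, Integrable (fun ω => φ (x s ω)) P)
    (hintgap : ∀ s ∈ Finset.Icc 1 (S + 1), Integrable (fun ω =>
      (φ (x s ω) + 1 / (2 * γ) * ‖x s ω - x (s - 1) ω‖ ^ 2)
        - (φ (z s ω) + 1 / (2 * γ) * ‖z s ω - x (s - 1) ω‖ ^ 2)) P)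
    (hintsq : ∀ s ∈ Finset.Icc 1 (S + 1),
      Integrable (fun ω => ‖x (s - 1) ω - z s ω‖ ^ 2) P)
    -- almost sure conditional one-stage bound
    (hE : ∀ s ∈ Finset.Icc 1 (S + 1), ∀ᵐ ω ∂P,
      (P[fun ω' => (φ (x s ω') + 1 / (2 * γ) * ‖x s ω' - x (s - 1) ω'‖ ^ 2)
            - (φ (z s ω') + 1 / (2 * γ) * ‖z s ω' - x (s - 1) ω'‖ ^ 2) | 𝒢 (s - 1)]) ω
        ≤ ε₁ s * ‖x (s - 1) ω - z s ω‖ ^ 2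
          + ε₂ s * ((φ (x (s - 1) ω) + 1 / (2 * γ) * ‖x (s - 1) ω - x (s - 1) ω‖ ^ 2)
              - (φ (z s ω) + 1 / (2 * γ) * ‖z s ω - x (s - 1) ω‖ ^ 2))
          + ε₃ s) :
    (∑ s ∈ Finset.Icc 1 (S + 1),
        (s : ℝ) ^ α * ∫ ω, ‖γ⁻¹ • (x (s - 1) ω - z s ω)‖ ^ 2 ∂P)
        / (∑ s ∈ Finset.Icc 1 (S + 1), (s : ℝ) ^ α)
      ≤ 32 * Δφ * (α + 1) / (γ * ((S : ℝ) + 1))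
        + 48 * c₃ * (α + 1) / (γ * ((S : ℝ) + 1) * (if α < 1 then α else 1)) :=
  stmt_0_general (mΘ := mΘ) P Ω hne hconv φ μ γ Δφ α c₃ hμ hγ hα hc₃ hweak hΔ S 𝒢 hle x z hxΩ hadapt
    hzadapt hz ε₁ ε₂ ε₃ hε₁ hε₂ hε₃ hintφ hintgap hintsq hE
end

section
/- Let Ω ⊆ ℝ^d be a nonempty closed convex set and f : ℝ^d → ℝ a convex function. Let x₁ ∈ Ω and for t = 1,…,T define x_{t+1} = Π_Ω(x_t − η g_t), where η > 0, Π_Ω denotes Euclidean projection onto Ω, and g_t is a random vector whose conditional expectation given all randomness before iteration t is a subgradient of f at x_t and which satisfies E[‖g_t‖²] ≤ G². Then, for x̂_T = (1/T)∑_{t=1}^T x_t and every x ∈ Ω, E[f(x̂_T) − f(x)] ≤ ‖x − x₁‖²/(2ηT) + ηG²/2. -/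
/-!
Projection onto a convex set does not increase the distance to points of the set, so
`‖x_{t+1} - x‖² ≤ ‖x_t - x‖² - 2η⟪g_t, x_t - x⟫ + η²‖g_t‖²`. Taking expectations and summing,
the distances telescope and `∑ E⟪g_t, x_t - x⟫ ≤ ‖x₁ - x‖²/(2η) + TηG²/2`. Since `x_t` is
measurable with respect to the past, the tower property lets us replace `g_t` by its conditional
expectation, a subgradient at `x_t`; the subgradient inequality together with Jensen's inequality
for the average iterate then bounds `f(x̂_T) - f(x)` by `T⁻¹` times that sum.
-/

open MeasureTheory RealInnerProductSpace Finset

def IsNearestPointIn {E : Type*} [NormedAddCommGroup E] (K : Set E) (y p : E) : Prop :=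
  p ∈ K ∧ ∀ u ∈ K, ‖p - y‖ ≤ ‖u - y‖

namespace IsNearestPointIn

variable {E : Type*} [NormedAddCommGroup E] [InnerProductSpace ℝ E] {K : Set E} {y p z : E}

theorem inner_sub_nonpos (hK : Convex ℝ K) (hp : IsNearestPointIn K y p) (hz : z ∈ K) :
    ⟪y - p, z - p⟫ ≤ 0 := by
  have : Nonempty K := ⟨⟨p, hp.1⟩⟩
  have hinf : ‖y - p‖ = ⨅ w : K, ‖y - w‖ := by
    have hbdd : BddBelow (Set.range fun w : K => ‖y - w‖) :=
      ⟨0, by rintro _ ⟨w, rfl⟩; exact norm_nonneg _⟩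
    refine le_antisymm (le_ciInf fun w => ?_) (ciInf_le hbdd ⟨p, hp.1⟩)
    simpa only [norm_sub_rev y] using hp.2 w w.2
  exact (norm_eq_iInf_iff_real_inner_le_zero hK hp.1).1 hinf z hz

theorem norm_sub_le (hK : Convex ℝ K) (hp : IsNearestPointIn K y p) (hz : z ∈ K) :
    ‖p - z‖ ≤ ‖y - z‖ := by
  have hexpand : ‖y - z‖ ^ 2 = ‖y - p‖ ^ 2 - 2 * ⟪y - p, z - p⟫ + ‖p - z‖ ^ 2 := by
    rw [show y - z = (y - p) - (z - p) by abel, norm_sub_sq_real, norm_sub_rev z p]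
  have := hp.inner_sub_nonpos hK hz
  exact pow_le_pow_iff_left₀ (norm_nonneg _) (norm_nonneg _) two_ne_zero |>.1
    (by nlinarith [sq_nonneg ‖y - p‖])

theorem inner_le_of_step (hK : Convex ℝ K) {x v : E} {η : ℝ} (hη : 0 < η)
    (hp : IsNearestPointIn K (x - η • v) p) (hz : z ∈ K) :
    ⟪v, x - z⟫ ≤ (‖x - z‖ ^ 2 - ‖p - z‖ ^ 2) / (2 * η) + η / 2 * ‖v‖ ^ 2 := by
  have hexpand : ‖x - η • v - z‖ ^ 2 = ‖x - z‖ ^ 2 - 2 * η * ⟪v, x - z⟫ + η ^ 2 * ‖v‖ ^ 2 := by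
    rw [show x - η • v - z = (x - z) - η • v by abel, norm_sub_sq_real, real_inner_smul_right,
      norm_smul, real_inner_comm, mul_pow, Real.norm_eq_abs, sq_abs]
    ring
  have hcontract := pow_le_pow_left₀ (norm_nonneg _) (hp.norm_sub_le hK hz) 2
  rw [div_add' _ _ _ (by positivity), le_div_iff₀ (by positivity)]
  nlinarith

end IsNearestPointIn

section CondExp

variable {α E : Type*} {m m₀ : MeasurableSpace α} {μ : Measure α}
  [NormedAddCommGroup E] [InnerProductSpace ℝ E]

theorem MeasureTheory.MemLp.integrable_inner {u v : α → E} (hu : MemLp u 2 μ)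
    (hv : MemLp v 2 μ) : Integrable (fun ω => ⟪u ω, v ω⟫) μ :=
  memLp_one_iff_integrable.1 ((innerSL ℝ).memLp_of_bilin 1 hu hv)

variable [CompleteSpace E] {g h : α → E}

theorem inner_condExp_ae_eq_condExp_inner (hh : StronglyMeasurable[m] h) (hg : Integrable g μ)
    (hgh : Integrable (fun ω => ⟪g ω, h ω⟫) μ) :
    (fun ω => ⟪μ[g|m] ω, h ω⟫) =ᵐ[μ] μ[fun ω => ⟪g ω, h ω⟫|m] :=
  (condExp_bilin_of_stronglyMeasurable_right (innerSL ℝ) hh hgh hg).symm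

theorem integrable_inner_condExp_left (hh : StronglyMeasurable[m] h) (hg : Integrable g μ)
    (hgh : Integrable (fun ω => ⟪g ω, h ω⟫) μ) :
    Integrable (fun ω => ⟪μ[g|m] ω, h ω⟫) μ :=
  integrable_condExp.congr (inner_condExp_ae_eq_condExp_inner hh hg hgh).symm

theorem integral_inner_condExp_left [IsFiniteMeasure μ] (hm : m ≤ m₀)
    (hh : StronglyMeasurable[m] h) (hg : Integrable g μ)
    (hgh : Integrable (fun ω => ⟪g ω, h ω⟫) μ) :
    ∫ ω, ⟪μ[g|m] ω, h ω⟫ ∂μ = ∫ ω, ⟪g ω, h ω⟫ ∂μ :=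
  (integral_congr_ae (inner_condExp_ae_eq_condExp_inner hh hg hgh)).trans (integral_condExp hm)

end CondExp

theorem ConvexOn.map_average_sub_le_average_inner {E ι : Type*} [NormedAddCommGroup E]
    [InnerProductSpace ℝ E] {f : E → ℝ} (hf : ConvexOn ℝ Set.univ f) {s : Finset ι}
    (hs : s.Nonempty) {y v : ι → E} (hv : ∀ i ∈ s, ∀ w, f (y i) + ⟪v i, w - y i⟫ ≤ f w)
    (z : E) :
    f ((#s : ℝ)⁻¹ • ∑ i ∈ s, y i) - f z ≤ (#s : ℝ)⁻¹ * ∑ i ∈ s, ⟪v i, y i - z⟫ := by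
  have hcard : (0 : ℝ) < #s := by exact_mod_cast hs.card_pos
  have hjensen : f (∑ i ∈ s, (#s : ℝ)⁻¹ • y i) ≤ ∑ i ∈ s, (#s : ℝ)⁻¹ • f (y i) :=
    hf.map_sum_le (fun _ _ => by positivity) (by simp [hcard.ne'])
      (fun _ _ => Set.mem_univ _)
  rw [← smul_sum, ← smul_sum, smul_eq_mul] at hjensen
  calc f ((#s : ℝ)⁻¹ • ∑ i ∈ s, y i) - f z ≤ (#s : ℝ)⁻¹ * ∑ i ∈ s, f (y i) - f z := by
        linarith
    _ = (#s : ℝ)⁻¹ * ∑ i ∈ s, (f (y i) - f z) := by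
        rw [sum_sub_distrib, sum_const, nsmul_eq_mul]
        field_simp
    _ ≤ (#s : ℝ)⁻¹ * ∑ i ∈ s, ⟪v i, y i - z⟫ := by
        gcongr with i hi
        have := hv i hi z
        rw [← neg_sub (y i) z, inner_neg_right] at this
        linarith

section ProjectedSGD

variable {E Θ : Type*} [NormedAddCommGroup E] [InnerProductSpace ℝ E] [MeasurableSpace Θ]
  {P : Measure Θ} {K : Set E} {η : ℝ} {z : E} {x g : ℕ → Θ → E} {T : ℕ}

theorem memLp_two_iterate_sub (hK : Convex ℝ K) (hz : z ∈ K)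
    (hx₁ : MemLp (fun ω => x 1 ω - z) 2 P) (hx : ∀ t, AEStronglyMeasurable (x t) P)
    (hg : ∀ t ∈ Icc 1 T, MemLp (g t) 2 P)
    (hproj : ∀ t ∈ Icc 1 T, ∀ ω, IsNearestPointIn K (x t ω - η • g t ω) (x (t + 1) ω)) :
    ∀ t ∈ Icc 1 (T + 1), MemLp (fun ω => x t ω - z) 2 P := by
  intro t ht
  obtain ⟨h1t, htT⟩ := mem_Icc.1 ht
  induction t, h1t using Nat.le_induction with
  | base => exact hx₁
  | succ t h1t ih =>
    have ht' : t ∈ Icc 1 T := mem_Icc.2 ⟨h1t, by omega⟩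
    refine ((ih (mem_Icc.2 ⟨h1t, by omega⟩) (by omega)).norm.add
      ((hg t ht').const_smul η).norm).of_le ((hx (t + 1)).sub aestronglyMeasurable_const)
      (.of_forall fun ω => ?_)
    calc ‖x (t + 1) ω - z‖ ≤ ‖x t ω - η • g t ω - z‖ := (hproj t ht' ω).norm_sub_le hK hz
      _ = ‖(x t ω - z) - η • g t ω‖ := by rw [sub_right_comm]
      _ ≤ ‖x t ω - z‖ + ‖η • g t ω‖ := norm_sub_le _ _
      _ ≤ ‖‖x t ω - z‖ + ‖(η • g t) ω‖‖ := le_abs_self _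

theorem sum_integral_inner_le_of_isNearestPointIn (hK : Convex ℝ K) (hη : 0 < η) (hz : z ∈ K)
    (hx : ∀ t ∈ Icc 1 (T + 1), MemLp (fun ω => x t ω - z) 2 P)
    (hg : ∀ t ∈ Icc 1 T, MemLp (g t) 2 P)
    (hproj : ∀ t ∈ Icc 1 T, ∀ ω, IsNearestPointIn K (x t ω - η • g t ω) (x (t + 1) ω)) :
    ∑ t ∈ Icc 1 T, ∫ ω, ⟪g t ω, x t ω - z⟫ ∂P
      ≤ (∫ ω, ‖x 1 ω - z‖ ^ 2 ∂P) / (2 * η)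
        + η / 2 * ∑ t ∈ Icc 1 T, ∫ ω, ‖g t ω‖ ^ 2 ∂P := by
  set D : ℕ → ℝ := fun t => ∫ ω, ‖x t ω - z‖ ^ 2 ∂P
  have hxsq : ∀ t ∈ Icc 1 (T + 1), Integrable (fun ω => ‖x t ω - z‖ ^ 2) P := fun t ht =>
    (memLp_two_iff_integrable_sq_norm (hx t ht).1).1 (hx t ht)
  have hgsq : ∀ t ∈ Icc 1 T, Integrable (fun ω => ‖g t ω‖ ^ 2) P := fun t ht =>
    (memLp_two_iff_integrable_sq_norm (hg t ht).1).1 (hg t ht)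
  have hstep : ∀ t ∈ Icc 1 T, ∫ ω, ⟪g t ω, x t ω - z⟫ ∂P
      ≤ (D t - D (t + 1)) / (2 * η) + η / 2 * ∫ ω, ‖g t ω‖ ^ 2 ∂P := by
    intro t ht
    obtain ⟨h1t, htT⟩ := mem_Icc.1 ht
    have hDt := hxsq t (mem_Icc.2 ⟨h1t, by omega⟩)
    have hDt' := hxsq (t + 1) (mem_Icc.2 ⟨by omega, by omega⟩)
    have hx' := hx t (mem_Icc.2 ⟨h1t, by omega⟩)
    have hdiff : Integrable (fun ω => (‖x t ω - z‖ ^ 2 - ‖x (t + 1) ω - z‖ ^ 2) / (2 * η)) P :=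
      (hDt.sub hDt').div_const _
    calc ∫ ω, ⟪g t ω, x t ω - z⟫ ∂P
        ≤ ∫ ω, ((‖x t ω - z‖ ^ 2 - ‖x (t + 1) ω - z‖ ^ 2) / (2 * η)
            + η / 2 * ‖g t ω‖ ^ 2) ∂P :=
          integral_mono ((hg t ht).integrable_inner hx')
            (hdiff.add ((hgsq t ht).const_mul _))
            fun ω => (hproj t ht ω).inner_le_of_step hK hη hz
      _ = (D t - D (t + 1)) / (2 * η) + η / 2 * ∫ ω, ‖g t ω‖ ^ 2 ∂P := by
          rw [integral_add hdiff ((hgsq t ht).const_mul _),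
            integral_div, integral_sub hDt hDt', integral_const_mul]
  have htelescope : ∑ t ∈ Icc 1 T, (D t - D (t + 1)) = D 1 - D (T + 1) := by
    rw [← Ico_add_one_right_eq_Icc, ← neg_sub, ← sum_Ico_sub D (by omega : 1 ≤ T + 1),
      ← sum_neg_distrib]
    simp only [neg_sub]
  have hDnonneg : 0 ≤ D (T + 1) := integral_nonneg fun ω => by positivity
  calc ∑ t ∈ Icc 1 T, ∫ ω, ⟪g t ω, x t ω - z⟫ ∂P
      ≤ ∑ t ∈ Icc 1 T, ((D t - D (t + 1)) / (2 * η) + η / 2 * ∫ ω, ‖g t ω‖ ^ 2 ∂P) :=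
        sum_le_sum hstep
    _ = (D 1 - D (T + 1)) / (2 * η) + η / 2 * ∑ t ∈ Icc 1 T, ∫ ω, ‖g t ω‖ ^ 2 ∂P := by
        rw [sum_add_distrib, ← sum_div, ← mul_sum, htelescope]
    _ ≤ D 1 / (2 * η) + η / 2 * ∑ t ∈ Icc 1 T, ∫ ω, ‖g t ω‖ ^ 2 ∂P := by
        gcongr
        linarith

end ProjectedSGD

theorem stmt_5_general {d : ℕ} {Θ : Type*} [mΘ : MeasurableSpace Θ]
    (P : Measure Θ) [IsProbabilityMeasure P]
    (Ω : Set (EuclideanSpace ℝ (Fin d)))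
    (hconv : Convex ℝ Ω)
    (f : EuclideanSpace ℝ (Fin d) → ℝ) (hf : ConvexOn ℝ Set.univ f)
    (x₁ : EuclideanSpace ℝ (Fin d))
    (η G : ℝ) (hη : 0 < η)
    (T : ℕ) (hT : 0 < T)
    (𝒢 : ℕ → MeasurableSpace Θ) (hle : ∀ t, 𝒢 t ≤ mΘ)
    (x g : ℕ → Θ → EuclideanSpace ℝ (Fin d))
    (hx1 : ∀ ω, x 1 ω = x₁)
    (hadapt : ∀ t, StronglyMeasurable[𝒢 t] (x t))
    (hgint : ∀ t ∈ Finset.Icc 1 T, Integrable (g t) P)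
    (hgsq : ∀ t ∈ Finset.Icc 1 T, Integrable (fun ω => ‖g t ω‖ ^ 2) P)
    (hmom : ∀ t ∈ Finset.Icc 1 T, ∫ ω, ‖g t ω‖ ^ 2 ∂P ≤ G ^ 2)
    (hsub : ∀ t ∈ Finset.Icc 1 T, ∀ᵐ ω ∂P,
      ∀ y, f y ≥ f (x t ω) + ⟪(P[g t | 𝒢 t]) ω, y - x t ω⟫)
    (hproj : ∀ t ∈ Finset.Icc 1 T, ∀ ω,
      x (t + 1) ω ∈ Ω ∧ ∀ u ∈ Ω,
        ‖x (t + 1) ω - (x t ω - η • g t ω)‖ ≤ ‖u - (x t ω - η • g t ω)‖)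
    (hint : Integrable (fun ω => f ((T : ℝ)⁻¹ • ∑ t ∈ Finset.Icc 1 T, x t ω)) P) :
    ∀ xr ∈ Ω,
      ∫ ω, (f ((T : ℝ)⁻¹ • ∑ t ∈ Finset.Icc 1 T, x t ω) - f xr) ∂P
        ≤ ‖xr - x₁‖ ^ 2 / (2 * η * T) + η * G ^ 2 / 2 := by
  intro xr hxr
  have hg : ∀ t ∈ Icc 1 T, MemLp (g t) 2 P := fun t ht =>
    (memLp_two_iff_integrable_sq_norm (hgint t ht).1).2 (hgsq t ht)
  have hx := memLp_two_iterate_sub hconv hxr (by simp only [hx1]; exact memLp_const _)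
    (fun t => ((hadapt t).mono (hle t)).aestronglyMeasurable) hg hproj
  have hinner : ∀ t ∈ Icc 1 T, Integrable (fun ω => ⟪g t ω, x t ω - xr⟫) P := fun t ht =>
    (hg t ht).integrable_inner (hx t (Icc_subset_Icc_right T.le_succ ht))
  have hadapt' : ∀ t, StronglyMeasurable[𝒢 t] (fun ω => x t ω - xr) := fun t =>
    (hadapt t).sub stronglyMeasurable_const
  have hcond : ∀ t ∈ Icc 1 T, Integrable (fun ω => ⟪P[g t | 𝒢 t] ω, x t ω - xr⟫) P :=
    fun t ht => integrable_inner_condExp_left (hadapt' t) (hgint t ht) (hinner t ht)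
  have hpathwise : ∀ᵐ ω ∂P, f ((T : ℝ)⁻¹ • ∑ t ∈ Icc 1 T, x t ω) - f xr
      ≤ (T : ℝ)⁻¹ * ∑ t ∈ Icc 1 T, ⟪P[g t | 𝒢 t] ω, x t ω - xr⟫ := by
    filter_upwards [(Filter.eventually_all_finset _).2 hsub] with ω hω
    simpa using hf.map_average_sub_le_average_inner (nonempty_Icc.2 hT) hω xr
  have hstart : ∫ ω, ‖x 1 ω - xr‖ ^ 2 ∂P = ‖xr - x₁‖ ^ 2 := by simp [hx1, norm_sub_rev]
  have hmoments : ∑ t ∈ Icc 1 T, ∫ ω, ‖g t ω‖ ^ 2 ∂P ≤ T * G ^ 2 := by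
    simpa using sum_le_sum hmom
  calc ∫ ω, (f ((T : ℝ)⁻¹ • ∑ t ∈ Icc 1 T, x t ω) - f xr) ∂P
      ≤ ∫ ω, (T : ℝ)⁻¹ * ∑ t ∈ Icc 1 T, ⟪P[g t | 𝒢 t] ω, x t ω - xr⟫ ∂P :=
        integral_mono_ae (hint.sub (integrable_const _))
          ((integrable_finsetSum _ hcond).const_mul _) hpathwise
    _ = (T : ℝ)⁻¹ * ∑ t ∈ Icc 1 T, ∫ ω, ⟪g t ω, x t ω - xr⟫ ∂P := by
        rw [integral_const_mul, integral_finsetSum _ hcond]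
        exact congrArg _ (sum_congr rfl fun t ht =>
          integral_inner_condExp_left (hle t) (hadapt' t) (hgint t ht) (hinner t ht))
    _ ≤ (T : ℝ)⁻¹ * (‖xr - x₁‖ ^ 2 / (2 * η) + η / 2 * (T * G ^ 2)) := by
        grw [sum_integral_inner_le_of_isNearestPointIn hconv hη hxr hx hg hproj, hstart,
          hmoments]
    _ = ‖xr - x₁‖ ^ 2 / (2 * η * T) + η * G ^ 2 / 2 := by
        field_simp

/-- Basic SGD convergence (Lemma on projected SGD for a convex `f`): if at each
iteration `t` the stochastic gradient `g_t` has conditional expectation (given the past)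
equal to a subgradient of `f` at `x_t`, `E‖g_t‖² ≤ G²`, and
`x_{t+1} = Π_Ω(x_t - η g_t)`, then the averaged iterate `x̂_T` satisfies, for any `x ∈ Ω`,
`E[f(x̂_T) - f(x)] ≤ ‖x - x₁‖²/(2ηT) + ηG²/2`. -/
theorem stmt_5 {d : ℕ} {Θ : Type*} [mΘ : MeasurableSpace Θ]
    (P : Measure Θ) [IsProbabilityMeasure P]
    (Ω : Set (EuclideanSpace ℝ (Fin d))) (hne : Ω.Nonempty) (hcl : IsClosed Ω)
    (hconv : Convex ℝ Ω)
    (f : EuclideanSpace ℝ (Fin d) → ℝ) (hf : ConvexOn ℝ Set.univ f)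
    (x₁ : EuclideanSpace ℝ (Fin d)) (hx₁mem : x₁ ∈ Ω)
    (η G : ℝ) (hη : 0 < η)
    (T : ℕ) (hT : 0 < T)
    (𝒢 : ℕ → MeasurableSpace Θ) (hle : ∀ t, 𝒢 t ≤ mΘ) (hmono : Monotone 𝒢)
    (x g : ℕ → Θ → EuclideanSpace ℝ (Fin d))
    (hx1 : ∀ ω, x 1 ω = x₁)
    (hadapt : ∀ t, StronglyMeasurable[𝒢 t] (x t))
    (hgint : ∀ t ∈ Finset.Icc 1 T, Integrable (g t) P)
    (hgsq : ∀ t ∈ Finset.Icc 1 T, Integrable (fun ω => ‖g t ω‖ ^ 2) P)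
    (hmom : ∀ t ∈ Finset.Icc 1 T, ∫ ω, ‖g t ω‖ ^ 2 ∂P ≤ G ^ 2)
    (hsub : ∀ t ∈ Finset.Icc 1 T, ∀ᵐ ω ∂P,
      ∀ y, f y ≥ f (x t ω) + ⟪(P[g t | 𝒢 t]) ω, y - x t ω⟫)
    (hproj : ∀ t ∈ Finset.Icc 1 T, ∀ ω,
      x (t + 1) ω ∈ Ω ∧ ∀ u ∈ Ω,
        ‖x (t + 1) ω - (x t ω - η • g t ω)‖ ≤ ‖u - (x t ω - η • g t ω)‖)
    (hint : Integrable (fun ω => f ((T : ℝ)⁻¹ • ∑ t ∈ Finset.Icc 1 T, x t ω)) P) :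
    ∀ xr ∈ Ω,
      ∫ ω, (f ((T : ℝ)⁻¹ • ∑ t ∈ Finset.Icc 1 T, x t ω) - f xr) ∂P
        ≤ ‖xr - x₁‖ ^ 2 / (2 * η * T) + η * G ^ 2 / 2 :=
  stmt_5_general (mΘ := mΘ) P Ω hconv f hf x₁ η G hη T hT 𝒢 hle x g hx1 hadapt hgint hgsq hmom hsub
    hproj hint
end

section
/- Let Ω ⊆ ℝ^d be a nonempty closed convex set, f : ℝ^d → ℝ a convex function, x₁ ∈ Ω, η > 0, G > 0, and g₁, …, g_T ∈ ℝ^d vectors with ‖g_t‖_∞ ≤ G for all t. Define s_{t,i} = ‖g_{1:t,i}‖₂ (the ℓ₂ norm of the vector of i-th coordinates of g₁,…,g_t), H_t = G·I + diag(s_t), ψ_t(x) = ½(x−x₁)ᵀH_t(x−x₁), and x_{t+1} = argmin_{x∈Ω} { η⟨x, (1/t)∑_{τ=1}^t g_τ⟩ + ψ_t(x)/t } for t = 1,…,T. Then, for any choice of subgradients v_t ∈ ∂f(x_t) and any x ∈ Ω, ∑_{t=1}^T (f(x_t) − f(x)) ≤ ((G + max_{1≤i≤d} ‖g_{1:T,i}‖₂)/(2η))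 ‖x − x₁‖² + η ∑_{i=1}^d ‖g_{1:T,i}‖₂ + ∑_{t=1}^T ⟨v_t − g_t, x_t − x⟩. -/
/-!
The iterates are follow-the-regularized-leader on the linear losses `⟪η g_t, ·⟫` with the diagonal
quadratic regularizers `ψ_t(u) = ½‖u - x₁‖²_{H_t}`, which grow with `t`. The FTRL objective is
quadratic along segments, so its minimizer `x_{t+1}` over the convex set `Ω` beats every `u ∈ Ω`
by `½‖u - x_{t+1}‖²_{H_t}`; with Young's inequality this telescopes to the regret bound
`∑ ⟪g_t, x_t - u⟫ ≤ ‖u - x₁‖²_{H_T} / (2η) + (η/2) ∑_t ∑_i g_{t,i}² / H_{t-1,i}`.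
The AdaGrad inequality `b / (G + √A) ≤ 2 (√(A + b) - √A)` for `0 ≤ b ≤ G²` bounds the last sum by
`2 ∑_i ‖g_{1:T,i}‖`, and the subgradient inequality turns the linear regret into the stated one.
-/

open RealInnerProductSpace Finset Filter Topology

lemma nonneg_of_forall_mul_add_sq_mul_nonneg {D Q : ℝ}
    (h : ∀ l ∈ Set.Ioc (0 : ℝ) 1, 0 ≤ l * D + l ^ 2 * Q) : 0 ≤ D := by
  have hlim : Tendsto (fun l : ℝ => D + l * Q) (𝓝[>] 0) (𝓝 D) := by
    have : Continuous (fun l : ℝ => D + l * Q) := by fun_prop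
    simpa using (this.tendsto 0).mono_left nhdsWithin_le_nhds
  refine ge_of_tendsto hlim ?_
  filter_upwards [Ioc_mem_nhdsGT zero_lt_one] with l hl
  exact nonneg_of_mul_nonneg_right (by linarith [h l hl]) hl.1

lemma IsMinOn.add_le_of_segment_eq {E : Type*} [AddCommGroup E] [Module ℝ E] {Ω : Set E}
    (hΩ : Convex ℝ Ω) {φ : E → ℝ} {xs u : E} (hmin : IsMinOn φ Ω xs) (hxs : xs ∈ Ω)
    (hu : u ∈ Ω) {D Q : ℝ} (hφ : ∀ l : ℝ, φ (xs + l • (u - xs)) = φ xs + l * D + l ^ 2 * Q) :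
    φ xs + Q ≤ φ u := by
  have hD : 0 ≤ D := nonneg_of_forall_mul_add_sq_mul_nonneg fun l hl => by
    have := isMinOn_iff.1 hmin _ (hΩ.add_smul_sub_mem hxs hu (Set.Ioc_subset_Icc_self hl))
    rw [hφ] at this
    linarith
  have h1 := hφ 1
  rw [one_smul, add_sub_cancel] at h1
  linarith

section WeightedSqNorm

variable {ι : Type*} [Fintype ι]

noncomputable def weightedSqNorm (a : ι → ℝ) (u : EuclideanSpace ℝ ι) : ℝ := ∑ i, a i * u i ^ 2

lemma weightedSqNorm_nonneg {a : ι → ℝ} (ha : ∀ i, 0 ≤ a i) (u : EuclideanSpace ℝ ι) :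
    0 ≤ weightedSqNorm a u :=
  sum_nonneg fun i _ => mul_nonneg (ha i) (sq_nonneg _)

lemma weightedSqNorm_mono {a b : ι → ℝ} (hab : ∀ i, a i ≤ b i) (u : EuclideanSpace ℝ ι) :
    weightedSqNorm a u ≤ weightedSqNorm b u :=
  sum_le_sum fun i _ => mul_le_mul_of_nonneg_right (hab i) (sq_nonneg _)

lemma weightedSqNorm_le_mul_norm_sq {a : ι → ℝ} {M : ℝ} (haM : ∀ i, a i ≤ M)
    (u : EuclideanSpace ℝ ι) : weightedSqNorm a u ≤ M * ‖u‖ ^ 2 := by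
  rw [EuclideanSpace.norm_sq_eq, mul_sum]
  refine sum_le_sum fun i _ => ?_
  rw [Real.norm_eq_abs, sq_abs]
  exact mul_le_mul_of_nonneg_right (haM i) (sq_nonneg _)

lemma weightedSqNorm_sub_comm (a : ι → ℝ) (u y : EuclideanSpace ℝ ι) :
    weightedSqNorm a (u - y) = weightedSqNorm a (y - u) := by
  simp only [weightedSqNorm, PiLp.sub_apply]
  exact sum_congr rfl fun i _ => by ring

lemma weightedSqNorm_add_smul (a : ι → ℝ) (y h : EuclideanSpace ℝ ι) (l : ℝ) :
    weightedSqNorm a (y + l • h)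
      = weightedSqNorm a y + l * (2 * ∑ i, a i * y i * h i) + l ^ 2 * weightedSqNorm a h := by
  simp only [weightedSqNorm, PiLp.add_apply, PiLp.smul_apply, smul_eq_mul, mul_sum,
    ← sum_add_distrib]
  exact sum_congr rfl fun i _ => by ring

lemma inner_le_weightedSqNorm_add {a : ι → ℝ} (ha : ∀ i, 0 < a i) (y ℓ : EuclideanSpace ℝ ι) :
    ⟪y, ℓ⟫ ≤ weightedSqNorm a y / 2 + (∑ i, ℓ i ^ 2 / a i) / 2 := by
  simp only [PiLp.inner_apply, RCLike.inner_apply, conj_trivial, weightedSqNorm, sum_div,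
    ← sum_add_distrib]
  refine sum_le_sum fun i _ => ?_
  have hai := ha i
  have hsq : a i * y i ^ 2 / 2 + ℓ i ^ 2 / a i / 2 - ℓ i * y i
      = (a i * y i - ℓ i) ^ 2 / (2 * a i) := by
    field_simp
    ring
  linarith [div_nonneg (sq_nonneg (a i * y i - ℓ i)) (by positivity : 0 ≤ 2 * a i)]

end WeightedSqNorm

section FTRL

variable {ι : Type*} [Fintype ι]

noncomputable def ftrlObjective (ℓ : ℕ → EuclideanSpace ℝ ι) (a : ℕ → ι → ℝ)
    (c : EuclideanSpace ℝ ι) (t : ℕ) (u : EuclideanSpace ℝ ι) : ℝ :=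
  ⟪u, ∑ τ ∈ Icc 1 t, ℓ τ⟫ + weightedSqNorm (a t) (u - c) / 2

variable {Ω : Set (EuclideanSpace ℝ ι)} {ℓ : ℕ → EuclideanSpace ℝ ι} {a : ℕ → ι → ℝ}
  {c : EuclideanSpace ℝ ι}

lemma isMinOn_ftrlObjective_zero (ha : ∀ i, 0 ≤ a 0 i) : IsMinOn (ftrlObjective ℓ a c 0) Ω c :=
  isMinOn_iff.2 fun u _ => by
    simpa [ftrlObjective, weightedSqNorm] using
      div_nonneg (weightedSqNorm_nonneg ha (u - c)) zero_le_two

lemma ftrlObjective_add_le_of_isMinOn (hΩ : Convex ℝ Ω) {t : ℕ} {y u : EuclideanSpace ℝ ι}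
    (hmin : IsMinOn (ftrlObjective ℓ a c t) Ω y) (hy : y ∈ Ω) (hu : u ∈ Ω) :
    ftrlObjective ℓ a c t y + weightedSqNorm (a t) (u - y) / 2 ≤ ftrlObjective ℓ a c t u :=
  hmin.add_le_of_segment_eq hΩ hy hu (D := ⟪u - y, ∑ τ ∈ Icc 1 t, ℓ τ⟫
      + ∑ i, a t i * (y - c) i * (u - y) i) fun l => by
    simp only [ftrlObjective, add_sub_right_comm y, weightedSqNorm_add_smul, inner_add_left,
      real_inner_smul_left]
    ring

lemma ftrlObjective_add_inner_le_succ (hmono : ∀ i, a t i ≤ a (t + 1) i)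
    (u : EuclideanSpace ℝ ι) :
    ftrlObjective ℓ a c t u + ⟪u, ℓ (t + 1)⟫ ≤ ftrlObjective ℓ a c (t + 1) u := by
  have := weightedSqNorm_mono hmono (u - c)
  rw [ftrlObjective, ftrlObjective, sum_Icc_succ_top (Nat.le_add_left 1 t), inner_add_right]
  linarith

lemma ftrlObjective_succ_ge (hΩ : Convex ℝ Ω) {t : ℕ} (ha : ∀ i, 0 < a t i)
    (hmono : ∀ i, a t i ≤ a (t + 1) i) {y z : EuclideanSpace ℝ ι}
    (hmin : IsMinOn (ftrlObjective ℓ a c t) Ω y) (hy : y ∈ Ω) (hz : z ∈ Ω) :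
    ftrlObjective ℓ a c t y + ⟪y, ℓ (t + 1)⟫ - (∑ i, ℓ (t + 1) i ^ 2 / a t i) / 2
      ≤ ftrlObjective ℓ a c (t + 1) z := by
  have hopt := ftrlObjective_add_le_of_isMinOn hΩ hmin hy hz
  have hyoung := inner_le_weightedSqNorm_add ha (y - z) (ℓ (t + 1))
  have hsucc := ftrlObjective_add_inner_le_succ (ℓ := ℓ) (c := c) hmono z
  rw [weightedSqNorm_sub_comm, inner_sub_left] at hyoung
  linarith

lemma sum_inner_sub_le_ftrlObjective (hΩ : Convex ℝ Ω) (ha : ∀ t i, 0 < a t i)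
    (hmono : ∀ t i, a t i ≤ a (t + 1) i) {x : ℕ → EuclideanSpace ℝ ι} :
    ∀ T : ℕ, (∀ t ≤ T, x (t + 1) ∈ Ω ∧ IsMinOn (ftrlObjective ℓ a c t) Ω (x (t + 1))) →
      ∑ τ ∈ Icc 1 T, (⟪x τ, ℓ τ⟫ - (∑ i, ℓ τ i ^ 2 / a (τ - 1) i) / 2)
        ≤ ftrlObjective ℓ a c T (x (T + 1))
  | 0, _ => by
    simpa [ftrlObjective] using
      div_nonneg (weightedSqNorm_nonneg (fun i => (ha 0 i).le) (x 1 - c)) zero_le_two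
  | T + 1, hx => by
    have ih := sum_inner_sub_le_ftrlObjective hΩ ha hmono T fun t ht => hx t (by omega)
    have hstep := ftrlObjective_succ_ge hΩ (ha T) (hmono T) (hx T (by omega)).2
      (hx T (by omega)).1 (hx (T + 1) le_rfl).1
    rw [sum_Icc_succ_top (Nat.le_add_left 1 T), Nat.add_sub_cancel]
    linarith

theorem ftrl_regret_le (hΩ : Convex ℝ Ω) (ha : ∀ t i, 0 < a t i)
    (hmono : ∀ t i, a t i ≤ a (t + 1) i) {x : ℕ → EuclideanSpace ℝ ι} {T : ℕ}
    (hx : ∀ t ≤ T, x (t + 1) ∈ Ω ∧ IsMinOn (ftrlObjective ℓ a c t) Ω (x (t + 1)))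
    {u : EuclideanSpace ℝ ι} (hu : u ∈ Ω) :
    ∑ τ ∈ Icc 1 T, ⟪x τ - u, ℓ τ⟫
      ≤ weightedSqNorm (a T) (u - c) / 2 + (∑ τ ∈ Icc 1 T, ∑ i, ℓ τ i ^ 2 / a (τ - 1) i) / 2 := by
  have htel := sum_inner_sub_le_ftrlObjective hΩ ha hmono T hx
  have hlast : ftrlObjective ℓ a c T (x (T + 1))
      ≤ ⟪u, ∑ τ ∈ Icc 1 T, ℓ τ⟫ + weightedSqNorm (a T) (u - c) / 2 :=
    isMinOn_iff.1 (hx T le_rfl).2 u hu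
  rw [sum_sub_distrib, ← sum_div] at htel
  simp only [inner_sub_left, sum_sub_distrib, ← inner_sum]
  linarith

end FTRL

lemma div_add_sqrt_le_two_mul_sub_sqrt {A b G : ℝ} (hA : 0 ≤ A) (hb : 0 ≤ b) (hbG : b ≤ G ^ 2)
    (hG : 0 ≤ G) : b / (G + √A) ≤ 2 * (√(A + b) - √A) := by
  have hS := Real.sqrt_nonneg A
  have hS'sq : √(A + b) ^ 2 = A + b := Real.sq_sqrt (by linarith)
  have hSS' : √A ≤ √(A + b) := Real.sqrt_le_sqrt (by linarith)
  have hS'le : √(A + b) ≤ G + √A :=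
    Real.sqrt_le_iff.2 ⟨by positivity, by nlinarith [Real.sq_sqrt hA]⟩
  rcases (add_nonneg hG hS).eq_or_lt with h0 | hpos
  · rw [← h0, div_zero]
    linarith
  rw [div_le_iff₀ hpos]
  nlinarith [Real.sq_sqrt hA, mul_nonneg (sub_nonneg.2 hSS') (sub_nonneg.2 hS'le)]

lemma sum_div_add_sqrt_le_two_mul_sqrt {G : ℝ} (hG : 0 ≤ G) {b : ℕ → ℝ} :
    ∀ T : ℕ, (∀ t ∈ Icc 1 T, 0 ≤ b t ∧ b t ≤ G ^ 2) →
      ∑ t ∈ Icc 1 T, b t / (G + √(∑ τ ∈ Icc 1 (t - 1), b τ)) ≤ 2 * √(∑ t ∈ Icc 1 T, b t)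
  | 0, _ => by simp
  | T + 1, hb => by
    have hsub : Icc 1 T ⊆ Icc 1 (T + 1) := Icc_subset_Icc_right T.le_succ
    have ih := sum_div_add_sqrt_le_two_mul_sqrt hG T fun t ht => hb t (hsub ht)
    obtain ⟨hb0, hbG⟩ := hb (T + 1) (right_mem_Icc.2 (Nat.le_add_left 1 T))
    have hstep := div_add_sqrt_le_two_mul_sub_sqrt
      (sum_nonneg fun t ht => (hb t (hsub ht)).1) hb0 hbG hG
    rw [sum_Icc_succ_top (Nat.le_add_left 1 T), sum_Icc_succ_top (Nat.le_add_left 1 T),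
      Nat.add_sub_cancel]
    linarith

section AdaGrad

variable {ι : Type*}

noncomputable def adagradDiag (G : ℝ) (g : ℕ → EuclideanSpace ℝ ι) (t : ℕ) (i : ι) : ℝ :=
  G + √(∑ τ ∈ Icc 1 t, g τ i ^ 2)

variable {G : ℝ} {g : ℕ → EuclideanSpace ℝ ι}

lemma adagradDiag_pos (hG : 0 < G) (t : ℕ) (i : ι) : 0 < adagradDiag G g t i :=
  add_pos_of_pos_of_nonneg hG (Real.sqrt_nonneg _)

lemma adagradDiag_le_succ (t : ℕ) (i : ι) : adagradDiag G g t i ≤ adagradDiag G g (t + 1) i := by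
  unfold adagradDiag
  gcongr
  exact t.le_succ

lemma adagradDiag_le_add_iSup [Finite ι] (t : ℕ) (i : ι) :
    adagradDiag G g t i ≤ G + ⨆ j, √(∑ τ ∈ Icc 1 t, g τ j ^ 2) :=
  add_le_add_right (le_ciSup (f := fun j => √(∑ τ ∈ Icc 1 t, g τ j ^ 2))
    (Set.finite_range _).bddAbove i) G

lemma sum_sum_sq_div_adagradDiag_le [Fintype ι] (hG : 0 ≤ G) {T : ℕ}
    (hgB : ∀ t ∈ Icc 1 T, ∀ i, |g t i| ≤ G) :
    ∑ τ ∈ Icc 1 T, ∑ i, g τ i ^ 2 / adagradDiag G g (τ - 1) i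
      ≤ 2 * ∑ i, √(∑ τ ∈ Icc 1 T, g τ i ^ 2) := by
  rw [sum_comm, mul_sum]
  exact sum_le_sum fun i _ => sum_div_add_sqrt_le_two_mul_sqrt hG T fun t ht =>
    ⟨sq_nonneg _, sq_le_sq' (abs_le.1 (hgB t ht i)).1 (abs_le.1 (hgB t ht i)).2⟩

variable {η : ℝ}

lemma adagrad_update_objective_eq [Fintype ι] (c u : EuclideanSpace ℝ ι) (t : ℕ) :
    η * ⟪u, (t : ℝ)⁻¹ • ∑ τ ∈ Icc 1 t, g τ⟫
        + (1 / (t : ℝ)) * ((1 / 2) *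
          ∑ i, (G + √(∑ τ ∈ Icc 1 t, g τ i ^ 2)) * (u i - c i) ^ 2)
      = (t : ℝ)⁻¹ * ftrlObjective (fun τ => η • g τ) (adagradDiag G g) c t u := by
  simp only [ftrlObjective, weightedSqNorm, adagradDiag, PiLp.sub_apply, inner_smul_right,
    ← smul_sum, one_div]
  ring

theorem adagrad_sum_inner_sub_le [Fintype ι] {Ω : Set (EuclideanSpace ℝ ι)} (hΩ : Convex ℝ Ω)
    (hη : 0 < η) (hG : 0 < G) {T : ℕ} (hgB : ∀ t ∈ Icc 1 T, ∀ i, |g t i| ≤ G)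
    {c : EuclideanSpace ℝ ι} {x : ℕ → EuclideanSpace ℝ ι}
    (hx : ∀ t ≤ T, x (t + 1) ∈ Ω ∧
      IsMinOn (ftrlObjective (fun τ => η • g τ) (adagradDiag G g) c t) Ω (x (t + 1)))
    {u : EuclideanSpace ℝ ι} (hu : u ∈ Ω) :
    ∑ τ ∈ Icc 1 T, ⟪g τ, x τ - u⟫
      ≤ (G + ⨆ i, √(∑ τ ∈ Icc 1 T, g τ i ^ 2)) / (2 * η) * ‖u - c‖ ^ 2
        + η * ∑ i, √(∑ τ ∈ Icc 1 T, g τ i ^ 2) := by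
  have hregret := ftrl_regret_le hΩ (adagradDiag_pos hG) adagradDiag_le_succ hx hu
  have hquad :=
    weightedSqNorm_le_mul_norm_sq (adagradDiag_le_add_iSup (G := G) (g := g) T) (u - c)
  have hgrad := sum_sum_sq_div_adagradDiag_le hG.le hgB
  have hlin : ∑ τ ∈ Icc 1 T, ⟪x τ - u, η • g τ⟫ = η * ∑ τ ∈ Icc 1 T, ⟪g τ, x τ - u⟫ := by
    rw [mul_sum]
    exact sum_congr rfl fun τ _ => by rw [real_inner_smul_right, real_inner_comm]
  have hscale : ∑ τ ∈ Icc 1 T, ∑ i, (η • g τ) i ^ 2 / adagradDiag G g (τ - 1) i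
      = η ^ 2 * ∑ τ ∈ Icc 1 T, ∑ i, g τ i ^ 2 / adagradDiag G g (τ - 1) i := by
    simp only [PiLp.smul_apply, smul_eq_mul, mul_pow, mul_div_assoc, mul_sum]
  rw [hlin, hscale] at hregret
  rw [← mul_le_mul_iff_of_pos_left hη]
  calc η * ∑ τ ∈ Icc 1 T, ⟪g τ, x τ - u⟫
      ≤ (G + ⨆ i, √(∑ τ ∈ Icc 1 T, g τ i ^ 2)) * ‖u - c‖ ^ 2 / 2
        + η ^ 2 * (2 * ∑ i, √(∑ τ ∈ Icc 1 T, g τ i ^ 2)) / 2 := by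
        refine hregret.trans ?_
        gcongr
    _ = _ := by field_simp

end AdaGrad

theorem stmt_11_general {d : ℕ}
    (Ω : Set (EuclideanSpace ℝ (Fin d)))
    (hconv : Convex ℝ Ω)
    (f : EuclideanSpace ℝ (Fin d) → ℝ)
    (x₁ : EuclideanSpace ℝ (Fin d)) (hx₁mem : x₁ ∈ Ω)
    (η G : ℝ) (hη : 0 < η) (hG : 0 < G)
    (T : ℕ) (g v x : ℕ → EuclideanSpace ℝ (Fin d))
    (hgB : ∀ t ∈ Finset.Icc 1 T, ∀ i, |g t i| ≤ G)
    (hx1 : x 1 = x₁)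
    (hsub : ∀ t ∈ Finset.Icc 1 T, ∀ y, f y ≥ f (x t) + ⟪v t, y - x t⟫)
    (hupdate : ∀ t ∈ Finset.Icc 1 T,
      x (t + 1) ∈ Ω ∧ ∀ u ∈ Ω,
        η * ⟪x (t + 1), (t : ℝ)⁻¹ • ∑ τ ∈ Finset.Icc 1 t, g τ⟫
            + (1 / (t : ℝ)) * ((1 / 2) *
              ∑ i, (G + Real.sqrt (∑ τ ∈ Finset.Icc 1 t, (g τ i) ^ 2)) * (x (t + 1) i - x₁ i) ^ 2)
          ≤ η * ⟪u, (t : ℝ)⁻¹ • ∑ τ ∈ Finset.Icc 1 t, g τ⟫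
            + (1 / (t : ℝ)) * ((1 / 2) *
              ∑ i, (G + Real.sqrt (∑ τ ∈ Finset.Icc 1 t, (g τ i) ^ 2)) * (u i - x₁ i) ^ 2)) :
    ∀ x₀ ∈ Ω,
      ∑ t ∈ Finset.Icc 1 T, (f (x t) - f x₀)
        ≤ (G + ⨆ i, Real.sqrt (∑ τ ∈ Finset.Icc 1 T, (g τ i) ^ 2)) / (2 * η) * ‖x₀ - x₁‖ ^ 2
          + η * ∑ i, Real.sqrt (∑ τ ∈ Finset.Icc 1 T, (g τ i) ^ 2)
          + ∑ t ∈ Finset.Icc 1 T, ⟪v t - g t, x t - x₀⟫ := by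
  intro x₀ hx₀
  have hmin : ∀ t ≤ T, x (t + 1) ∈ Ω ∧
      IsMinOn (ftrlObjective (fun τ => η • g τ) (adagradDiag G g) x₁ t) Ω (x (t + 1)) := by
    intro t ht
    rcases t.eq_zero_or_pos with rfl | ht0
    · rw [zero_add, hx1]
      exact ⟨hx₁mem, isMinOn_ftrlObjective_zero fun i => (adagradDiag_pos hG 0 i).le⟩
    obtain ⟨hmem, hle⟩ := hupdate t (mem_Icc.2 ⟨ht0, ht⟩)
    refine ⟨hmem, isMinOn_iff.2 fun u hu => ?_⟩
    have h := hle u hu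
    rw [adagrad_update_objective_eq, adagrad_update_objective_eq] at h
    exact le_of_mul_le_mul_left h (by positivity)
  have hlin : ∀ t ∈ Icc 1 T, f (x t) - f x₀ ≤ ⟪g t, x t - x₀⟫ + ⟪v t - g t, x t - x₀⟫ :=
    fun t ht => by
      have hv := hsub t ht x₀
      rw [← neg_sub, inner_neg_right] at hv
      rw [← inner_add_left, add_sub_cancel]
      linarith
  calc ∑ t ∈ Icc 1 T, (f (x t) - f x₀)
      ≤ ∑ t ∈ Icc 1 T, (⟪g t, x t - x₀⟫ + ⟪v t - g t, x t - x₀⟫) := sum_le_sum hlin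
    _ = ∑ t ∈ Icc 1 T, ⟪g t, x t - x₀⟫ + ∑ t ∈ Icc 1 T, ⟪v t - g t, x t - x₀⟫ := sum_add_distrib
    _ ≤ _ := by gcongr; exact adagrad_sum_inner_sub_le hconv hη hG hgB hmin hx₀

/-- Deterministic (pathwise) AdaGrad regret bound: with `H_t = G·I + diag(s_t)`,
`s_{t,i} = ‖g_{1:t,i}‖₂`, `ψ_t(x) = ½(x-x₁)ᵀH_t(x-x₁)` and
`x_{t+1} = argmin_{x ∈ Ω} η⟨x, (1/t)∑_{τ≤t} g_τ⟩ + ψ_t(x)/t`, for any subgradients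
`v_t ∈ ∂f(x_t)` and any `x ∈ Ω`:
`∑_{t=1}^T (f(x_t) - f(x)) ≤ ((G + max_i ‖g_{1:T,i}‖)/(2η))‖x - x₁‖² + η ∑_i ‖g_{1:T,i}‖
  + ∑_{t=1}^T ⟨v_t - g_t, x_t - x⟩`. -/
theorem stmt_11 {d : ℕ} (hd : 0 < d)
    (Ω : Set (EuclideanSpace ℝ (Fin d))) (hne : Ω.Nonempty) (hcl : IsClosed Ω)
    (hconv : Convex ℝ Ω)
    (f : EuclideanSpace ℝ (Fin d) → ℝ) (hf : ConvexOn ℝ Set.univ f)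
    (x₁ : EuclideanSpace ℝ (Fin d)) (hx₁mem : x₁ ∈ Ω)
    (η G : ℝ) (hη : 0 < η) (hG : 0 < G)
    (T : ℕ) (g v x : ℕ → EuclideanSpace ℝ (Fin d))
    (hgB : ∀ t ∈ Finset.Icc 1 T, ∀ i, |g t i| ≤ G)
    (hx1 : x 1 = x₁)
    (hsub : ∀ t ∈ Finset.Icc 1 T, ∀ y, f y ≥ f (x t) + ⟪v t, y - x t⟫)
    (hupdate : ∀ t ∈ Finset.Icc 1 T,
      x (t + 1) ∈ Ω ∧ ∀ u ∈ Ω,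
        η * ⟪x (t + 1), (t : ℝ)⁻¹ • ∑ τ ∈ Finset.Icc 1 t, g τ⟫
            + (1 / (t : ℝ)) * ((1 / 2) *
              ∑ i, (G + Real.sqrt (∑ τ ∈ Finset.Icc 1 t, (g τ i) ^ 2)) * (x (t + 1) i - x₁ i) ^ 2)
          ≤ η * ⟪u, (t : ℝ)⁻¹ • ∑ τ ∈ Finset.Icc 1 t, g τ⟫
            + (1 / (t : ℝ)) * ((1 / 2) *
              ∑ i, (G + Real.sqrt (∑ τ ∈ Finset.Icc 1 t, (g τ i) ^ 2)) * (u i - x₁ i) ^ 2)) :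
    ∀ x₀ ∈ Ω,
      ∑ t ∈ Finset.Icc 1 T, (f (x t) - f x₀)
        ≤ (G + ⨆ i, Real.sqrt (∑ τ ∈ Finset.Icc 1 T, (g τ i) ^ 2)) / (2 * η) * ‖x₀ - x₁‖ ^ 2
          + η * ∑ i, Real.sqrt (∑ τ ∈ Finset.Icc 1 T, (g τ i) ^ 2)
          + ∑ t ∈ Finset.Icc 1 T, ⟪v t - g t, x t - x₀⟫ :=
  stmt_11_general Ω hconv f x₁ hx₁mem η G hη hG T g v x hgB hx1 hsub hupdate
end

section
/- Let Ω ⊆ ℝ^d be a nonempty closed convex set, φ : ℝ^d → ℝ be μ-weakly convex (μ > 0), γ = 1/(2μ), and x₋ ∈ Ω. Set f(x) = φ(x) + (1/(2γ))‖x − x₋‖² and let z be the unique minimizer of f over Ω. Suppose x₊ is an Ω-valued random vector satisfying E[f(x₊) − f(z)] ≤ ε₁‖x₋ − z‖² + ε₂ (f(x₋) − f(z)) + ε₃, where 0 ≤ ε₁ ≤ 1/(48γ), 0 ≤ ε₂ ≤ 1/2 and ε₃ ≥ 0. Then (1/(8γ))‖x₋ − z‖² ≤ 4 E[φ(x₋)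 − φ(x₊)] + 6ε₃; equivalently, (γ/8)‖∇φ_γ(x₋)‖² ≤ 4 E[φ(x₋) − φ(x₊)] + 6ε₃, where ∇φ_γ(x₋) = γ⁻¹(x₋ − z). -/
open MeasureTheory RealInnerProductSpace

set_option maxHeartbeats 1000000 in
/-- Single-stage descent inequality: with `γ = 1/(2μ)`, `f(x) = φ(x) + (1/(2γ))‖x - x₋‖²`,
`z` the minimizer of `f` over `Ω`, and a random `x₊ ∈ Ω` satisfying
`E[f(x₊) - f(z)] ≤ ε₁‖x₋ - z‖² + ε₂(f(x₋) - f(z)) + ε₃` with `ε₁ ≤ 1/(48γ)`, `ε₂ ≤ 1/2`,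
one has `(1/(8γ))‖x₋ - z‖² ≤ 4E[φ(x₋) - φ(x₊)] + 6ε₃`, equivalently
`(γ/8)‖∇φ_γ(x₋)‖² ≤ 4E[φ(x₋) - φ(x₊)] + 6ε₃` with `∇φ_γ(x₋) = γ⁻¹(x₋ - z)`. -/
theorem stmt_13 {d : ℕ} {Θ : Type*} [mΘ : MeasurableSpace Θ]
    (P : Measure Θ) [IsProbabilityMeasure P]
    (Ω : Set (EuclideanSpace ℝ (Fin d))) (hne : Ω.Nonempty) (hcl : IsClosed Ω)
    (hconv : Convex ℝ Ω)
    (φ : EuclideanSpace ℝ (Fin d) → ℝ) (μ γ : ℝ) (hμ : 0 < μ) (hγ : γ = 1 / (2 * μ))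
    (hweak : ConvexOn ℝ Set.univ fun x => φ x + μ / 2 * ‖x‖ ^ 2)
    (xm z : EuclideanSpace ℝ (Fin d)) (hxm : xm ∈ Ω) (hzΩ : z ∈ Ω)
    (hzmin : ∀ y ∈ Ω,
      φ z + 1 / (2 * γ) * ‖z - xm‖ ^ 2 ≤ φ y + 1 / (2 * γ) * ‖y - xm‖ ^ 2)
    (ε₁ ε₂ ε₃ : ℝ)
    (hε₁0 : 0 ≤ ε₁) (hε₁ : ε₁ ≤ 1 / (48 * γ))
    (hε₂0 : 0 ≤ ε₂) (hε₂ : ε₂ ≤ 1 / 2) (hε₃0 : 0 ≤ ε₃)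
    (xp : Θ → EuclideanSpace ℝ (Fin d)) (hxp : ∀ ω, xp ω ∈ Ω)
    (hφint : Integrable (fun ω => φ (xp ω)) P)
    (hnint : Integrable (fun ω => ‖xp ω - xm‖ ^ 2) P)
    (hE : ∫ ω, ((φ (xp ω) + 1 / (2 * γ) * ‖xp ω - xm‖ ^ 2)
            - (φ z + 1 / (2 * γ) * ‖z - xm‖ ^ 2)) ∂P
      ≤ ε₁ * ‖xm - z‖ ^ 2
        + ε₂ * ((φ xm + 1 / (2 * γ) * ‖xm - xm‖ ^ 2)
            - (φ z + 1 / (2 * γ) * ‖z - xm‖ ^ 2))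
        + ε₃) :
    1 / (8 * γ) * ‖xm - z‖ ^ 2 ≤ 4 * ∫ ω, (φ xm - φ (xp ω)) ∂P + 6 * ε₃ ∧
    γ / 8 * ‖γ⁻¹ • (xm - z)‖ ^ 2 ≤ 4 * ∫ ω, (φ xm - φ (xp ω)) ∂P + 6 * ε₃ := by
  have hγpos : 0 < γ := by rw [hγ]; positivity
  have hγne : γ ≠ 0 := ne_of_gt hγpos
  have hcμ : 1 / (2 * γ) = μ := by rw [hγ]; field_simp
  have hN0 : (0:ℝ) ≤ ‖xm - z‖ ^ 2 := by positivity
  -- midpoint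
  set w : EuclideanSpace ℝ (Fin d) := (1/2 : ℝ) • xm + (1/2 : ℝ) • z with hw
  have hwΩ : w ∈ Ω := hconv hxm hzΩ (by norm_num) (by norm_num) (by norm_num)
  have hNz : ‖z - xm‖ ^ 2 = ‖xm - z‖ ^ 2 := by rw [norm_sub_rev]
  have hwxm : ‖w - xm‖ ^ 2 = ‖xm - z‖ ^ 2 / 4 := by
    have h1 : w - xm = (1/2 : ℝ) • (z - xm) := by rw [hw]; module
    rw [h1, norm_smul, mul_pow, hNz]
    norm_num
    ring
  have hwnorm : (1/2) * ‖xm‖ ^ 2 + (1/2) * ‖z‖ ^ 2 - ‖w‖ ^ 2 = ‖xm - z‖ ^ 2 / 4 := by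
    have h1 : w = (1/2 : ℝ) • (xm + z) := by rw [hw]; module
    have h2 : ‖w‖ ^ 2 = (1/4) * ‖xm + z‖ ^ 2 := by
      rw [h1, norm_smul, mul_pow]; norm_num
    have h3 := parallelogram_law_with_norm ℝ xm z
    rw [h2]
    nlinarith [h3]
  have hcvx := hweak.2 (Set.mem_univ xm) (Set.mem_univ z)
    (by norm_num : (0:ℝ) ≤ 1/2) (by norm_num : (0:ℝ) ≤ 1/2) (by norm_num : (1/2:ℝ) + 1/2 = 1)
  simp only [← hw, smul_eq_mul] at hcvx
  have hmin := hzmin w hwΩ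
  rw [hcμ] at hmin
  rw [hNz, hwxm] at hmin
  -- strong convexity growth: f(xm) - f(z) ≥ (μ/4) ‖xm - z‖²
  have hD : μ / 4 * ‖xm - z‖ ^ 2 ≤ φ xm - φ z - μ * ‖xm - z‖ ^ 2 := by
    nlinarith [hcvx, hmin, hwnorm, hμ.le]
  -- integral facts
  have hint1 : Integrable (fun ω => φ (xp ω) + 1 / (2 * γ) * ‖xp ω - xm‖ ^ 2) P :=
    hφint.add (hnint.const_mul _)
  have hLeq : ∫ ω, ((φ (xp ω) + 1 / (2 * γ) * ‖xp ω - xm‖ ^ 2)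
            - (φ z + 1 / (2 * γ) * ‖z - xm‖ ^ 2)) ∂P
      = (∫ ω, φ (xp ω) ∂P) + μ * (∫ ω, ‖xp ω - xm‖ ^ 2 ∂P)
          - (φ z + μ * ‖xm - z‖ ^ 2) := by
    rw [integral_sub hint1 (integrable_const _), integral_add hφint (hnint.const_mul _),
      integral_const_mul, integral_const, hcμ, hNz]
    simp
  have hL0 : (0:ℝ) ≤ ∫ ω, ((φ (xp ω) + 1 / (2 * γ) * ‖xp ω - xm‖ ^ 2)
            - (φ z + 1 / (2 * γ) * ‖z - xm‖ ^ 2)) ∂P :=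
    integral_nonneg fun ω => sub_nonneg.2 (hzmin _ (hxp ω))
  have hIn0 : (0:ℝ) ≤ ∫ ω, ‖xp ω - xm‖ ^ 2 ∂P := integral_nonneg fun ω => by positivity
  have hJ : ∫ ω, (φ xm - φ (xp ω)) ∂P = φ xm - ∫ ω, φ (xp ω) ∂P := by
    rw [integral_sub (integrable_const _) hφint, integral_const]
    simp
  rw [hLeq] at hE hL0
  simp only [sub_self, norm_zero, hcμ, hNz] at hE
  have hε₁' : ε₁ ≤ μ / 24 := by
    have : 1 / (48 * γ) = μ / 24 := by rw [hγ]; field_simp; ring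
    linarith [hε₁, this ▸ hε₁]
  have hγ8 : 1 / (8 * γ) = μ / 4 := by rw [hγ]; field_simp; ring
  have main : 1 / (8 * γ) * ‖xm - z‖ ^ 2 ≤ 4 * ∫ ω, (φ xm - φ (xp ω)) ∂P + 6 * ε₃ := by
    rw [hγ8, hJ]
    nlinarith [hD, hE, hL0, mul_nonneg hμ.le hIn0,
      mul_nonneg (by linarith : (0:ℝ) ≤ 1/2 - ε₂) (by nlinarith : (0:ℝ) ≤ φ xm - φ z - μ * ‖xm - z‖ ^ 2),
      mul_nonneg (by linarith : (0:ℝ) ≤ μ / 24 - ε₁) hN0]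
  refine ⟨main, ?_⟩
  have hns : ‖γ⁻¹ • (xm - z)‖ ^ 2 = γ⁻¹ ^ 2 * ‖xm - z‖ ^ 2 := by
    rw [norm_smul, Real.norm_eq_abs, abs_of_pos (inv_pos.2 hγpos), mul_pow]
  have : γ / 8 * ‖γ⁻¹ • (xm - z)‖ ^ 2 = 1 / (8 * γ) * ‖xm - z‖ ^ 2 := by
    rw [hns]; field_simp
  rw [this]; exact main
end
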